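/- arXiv:2310.02891 — 5 statements merged into one kernel-verified Lean document; each statement's English description precedes it below -/
import Mathlib

section
/- Fix γ > 0 and let (ψ_t)_{t>0} be a family of measurable kernels in the class P_γ on M. For f ∈ L¹(M,μ) define K_t f(x) = ∫_M ψ_t(x,y) f(y) dμ(y), set M_f = ∫_M f dμ, and fix a base point x₀ ∈ M. Then, as t → +∞, (i) ∫_M |K_t f(x) − M_f ψ_t(x,x₀)| dμ(x) → 0, and (ii) sup_{x ∈ M} |K_t f(x) − M_f ψ_t(x,x₀)| · V(x, t^{1/γ}) → 0. -/
/-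
Write `K_t f(x) - M_f ψ_t(x,x₀) = ∫ (ψ_t(x,y) - ψ_t(x,x₀)) f(y) dμ(y)` and split the `y`-integral
into a large ball `B(x₀,R)` and its complement. On the ball, (P4) gives
`|ψ_t(x,y) - ψ_t(x,x₀)| ≤ C_R t^{-θ} ψ_t(x,x₀)`. Off the ball, `|ψ_t(x,y) - ψ_t(x,x₀)|` is at most
`sup_y ψ_t(x,y)`, and its `x`-integral is at most `2` by symmetry and (P2). After Tonelli (for
the `L¹` norm) or multiplication by `V(x,t^{1/γ}) ≤ C / sup_y ψ_t(x,y)` (for the weighted sup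
norm), the error is `O(t^{-θ}) ‖f‖₁ + O(∫_{B(x₀,R)ᶜ} |f|)`; let `t → ∞`, then `R → ∞`.
-/

open MeasureTheory Metric Real Filter

open scoped ENNReal Topology

section Generic

variable {α β : Type*} [MeasurableSpace α] {μ : Measure α}

theorem lintegral_mul_le_add_compl {g h : α → ℝ≥0∞} (hg : AEMeasurable g μ) {s : Set α}
    (hs : MeasurableSet s) {a b : ℝ≥0∞} (ha : ∀ y ∈ s, h y ≤ a) (hb : ∀ y ∈ sᶜ, h y ≤ b) :
    ∫⁻ y, h y * g y ∂μ ≤ a * ∫⁻ y in s, g y ∂μ + b * ∫⁻ y in sᶜ, g y ∂μ := by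
  rw [← lintegral_add_compl _ hs, ← lintegral_const_mul'' _ hg.restrict,
    ← lintegral_const_mul'' _ hg.restrict]
  exact add_le_add (setLIntegral_mono' hs fun y hy => mul_le_mul_left (ha y hy) _)
    (setLIntegral_mono' hs.compl fun y hy => mul_le_mul_left (hb y hy) _)

theorem lintegral_enorm_integral_mul_le [MeasurableSpace β] {ν : Measure β} [SFinite μ]
    [SFinite ν] {F : α → β → ℝ} (hF : Measurable (Function.uncurry F)) {f : β → ℝ}
    (hf : AEStronglyMeasurable f ν) :
    ∫⁻ x, ‖∫ y, F x y * f y ∂ν‖ₑ ∂μ ≤ ∫⁻ y, (∫⁻ x, ‖F x y‖ₑ ∂μ) * ‖f y‖ₑ ∂ν := by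
  have hmeas : AEMeasurable (fun p : α × β => ‖F p.1 p.2‖ₑ * ‖f p.2‖ₑ) (μ.prod ν) :=
    hF.enorm.aemeasurable.mul
      (hf.comp_quasiMeasurePreserving Measure.quasiMeasurePreserving_snd).enorm
  calc ∫⁻ x, ‖∫ y, F x y * f y ∂ν‖ₑ ∂μ
      ≤ ∫⁻ x, ∫⁻ y, ‖F x y‖ₑ * ‖f y‖ₑ ∂ν ∂μ :=
        lintegral_mono fun x => by
          simpa only [enorm_mul] using
            enorm_integral_le_lintegral_enorm (μ := ν) fun y => F x y * f y
    _ = ∫⁻ y, ∫⁻ x, ‖F x y‖ₑ * ‖f y‖ₑ ∂μ ∂ν := lintegral_lintegral_swap hmeas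
    _ = ∫⁻ y, (∫⁻ x, ‖F x y‖ₑ ∂μ) * ‖f y‖ₑ ∂ν :=
        lintegral_congr fun y => lintegral_mul_const _ (hF.comp measurable_prodMk_right).enorm

theorem bddAbove_range_of_pos_le_mul_iSup {ι : Sort*} {g : ι → ℝ} {a c : ℝ} (hc : 0 < c)
    (h : c ≤ a * ⨆ i, g i) : BddAbove (Set.range g) := by
  by_contra hunb
  rw [Real.iSup_of_not_bddAbove hunb, mul_zero] at h
  exact hc.not_ge h

theorem tendsto_zero_of_le_add_tail {ι κ : Type*} {l : Filter ι} {l' : Filter κ} [l'.NeBot]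
    {u : ι → ℝ≥0∞} {T : κ → ℝ≥0∞} (hT : Tendsto T l' (𝓝 0))
    (h : ∀ᶠ R in l', ∃ e : ι → ℝ≥0∞, Tendsto e l (𝓝 0) ∧ ∀ᶠ i in l, u i ≤ e i + T R) :
    Tendsto u l (𝓝 0) := by
  refine ENNReal.tendsto_nhds_zero.2 fun ε hε => ?_
  have hε2 : 0 < ε / 2 := ENNReal.half_pos hε.ne'
  obtain ⟨R, ⟨e, he, hue⟩, hTR⟩ := (h.and (hT.eventually_lt_const hε2)).exists
  filter_upwards [hue, he.eventually_lt_const hε2] with i hui hei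
  calc u i ≤ e i + T R := hui
    _ ≤ ε / 2 + ε / 2 := add_le_add hei.le hTR.le
    _ = ε := ENNReal.add_halves ε

end Generic

section Metric

variable {α : Type*} [PseudoMetricSpace α] [MeasurableSpace α] {μ : Measure α}

theorem sigmaFinite_of_measure_ball_lt_top (x₀ : α)
    (h : ∀ r : ℝ, 0 < r → μ (ball x₀ r) < ∞) : SigmaFinite μ :=
  Measure.sigmaFinite_of_countable (Set.countable_range _)
    (Set.forall_mem_range.2 fun n : ℕ => h _ n.cast_add_one_pos)
    (by rw [Set.sUnion_range, iUnion_ball_nat_succ])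

theorem tendsto_setLIntegral_compl_closedBall [OpensMeasurableSpace α] {f : α → ℝ≥0∞}
    (hf : ∫⁻ x, f x ∂μ ≠ ∞) (x₀ : α) :
    Tendsto (fun R : ℝ => ∫⁻ x in (closedBall x₀ R)ᶜ, f x ∂μ) atTop (𝓝 0) := by
  have hanti : Antitone fun R : ℝ => (closedBall x₀ R)ᶜ := fun R R' hR =>
    Set.compl_subset_compl.2 (closedBall_subset_closedBall hR)
  have hempty : ⋂ R : ℝ, (closedBall x₀ R)ᶜ = ∅ :=
    Set.eq_empty_of_forall_notMem fun y hy =>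
      Set.mem_iInter.1 hy (dist y x₀) (mem_closedBall.2 le_rfl)
  have := tendsto_measure_iInter_atTop (μ := μ.withDensity f)
    (fun R => measurableSet_closedBall.compl.nullMeasurableSet) hanti
    ⟨0, by
      rw [withDensity_apply _ measurableSet_closedBall.compl]
      exact ne_top_of_le_ne_top hf (setLIntegral_le_lintegral _ _)⟩
  rw [hempty, measure_empty] at this
  refine this.congr fun R => ?_
  exact withDensity_apply _ measurableSet_closedBall.compl

end Metric

structure IsSymmMarkovDensity {α : Type*} [MeasurableSpace α] (μ : Measure α)
    (k : α → α → ℝ) : Prop where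
  measurable : Measurable (Function.uncurry k)
  symm : ∀ x y, k x y = k y x
  nonneg : ∀ x y, 0 ≤ k x y
  integral_eq_one : ∀ x, ∫ y, k x y ∂μ = 1

namespace IsSymmMarkovDensity

variable {α : Type*} [MeasurableSpace α] {μ : Measure α} {k : α → α → ℝ}

theorem measurable_left (hk : IsSymmMarkovDensity μ k) (y : α) : Measurable fun x => k x y :=
  hk.measurable.comp (measurable_id.prodMk measurable_const)

theorem measurable_right (hk : IsSymmMarkovDensity μ k) (x : α) : Measurable (k x) :=
  hk.measurable.comp measurable_prodMk_left

theorem lintegral_enorm_left (hk : IsSymmMarkovDensity μ k) (y : α) :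
    ∫⁻ x, ‖k x y‖ₑ ∂μ = 1 := by
  have hint : Integrable (k y) μ :=
    Integrable.of_integral_ne_zero (by rw [hk.integral_eq_one]; exact one_ne_zero)
  simp_rw [hk.symm _ y]
  rw [← ofReal_integral_norm_eq_lintegral_enorm hint]
  simp_rw [Real.norm_of_nonneg (hk.nonneg y _), hk.integral_eq_one, ENNReal.ofReal_one]

theorem lintegral_enorm_sub_le_two (hk : IsSymmMarkovDensity μ k) (y y' : α) :
    ∫⁻ x, ‖k x y - k x y'‖ₑ ∂μ ≤ 2 :=
  calc ∫⁻ x, ‖k x y - k x y'‖ₑ ∂μ ≤ ∫⁻ x, ‖k x y‖ₑ + ‖k x y'‖ₑ ∂μ :=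
        lintegral_mono fun x => enorm_sub_le
    _ = 2 := by
        rw [lintegral_add_left (hk.measurable_left y).enorm, hk.lintegral_enorm_left,
          hk.lintegral_enorm_left, one_add_one_eq_two]

theorem lintegral_enorm_sub_le_of_abs_sub_le (hk : IsSymmMarkovDensity μ k) {y y' : α} {ε : ℝ}
    (h : ∀ x, |k x y' - k x y| ≤ ε * k x y') :
    ∫⁻ x, ‖k x y - k x y'‖ₑ ∂μ ≤ ENNReal.ofReal ε :=
  calc ∫⁻ x, ‖k x y - k x y'‖ₑ ∂μ ≤ ∫⁻ x, ENNReal.ofReal ε * ‖k x y'‖ₑ ∂μ :=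
        lintegral_mono fun x => by
          rw [Real.enorm_eq_ofReal_abs, abs_sub_comm, Real.enorm_eq_ofReal (hk.nonneg x y'),
            ← ENNReal.ofReal_mul' (hk.nonneg x y')]
          exact ENNReal.ofReal_le_ofReal (h x)
    _ = ENNReal.ofReal ε := by
        rw [lintegral_const_mul' _ _ ENNReal.ofReal_ne_top, hk.lintegral_enorm_left, mul_one]

theorem integral_mul_sub_eq (hk : IsSymmMarkovDensity μ k) {f : α → ℝ} (hf : Integrable f μ)
    {x : α} (hbdd : BddAbove (Set.range (k x))) (x₀ : α) :
    ∫ y, k x y * f y ∂μ - (∫ y, f y ∂μ) * k x x₀ = ∫ y, (k x y - k x x₀) * f y ∂μ := by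
  have hint : Integrable (fun y => k x y * f y) μ :=
    hf.bdd_mul (hk.measurable_right x).aestronglyMeasurable (c := ⨆ y, k x y)
      (ae_of_all _ fun y => by
        rw [Real.norm_of_nonneg (hk.nonneg x y)]; exact le_ciSup hbdd y)
  simp_rw [sub_mul]
  rw [integral_sub hint (hf.const_mul _), integral_const_mul, mul_comm]

theorem aestronglyMeasurable_integral_mul [SFinite μ] (hk : IsSymmMarkovDensity μ k)
    {f : α → ℝ} (hf : AEStronglyMeasurable f μ) :
    AEStronglyMeasurable (fun x => ∫ y, k x y * f y ∂μ) μ :=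
  (hk.measurable.aestronglyMeasurable.mul
    (hf.comp_quasiMeasurePreserving Measure.quasiMeasurePreserving_snd)).integral_prod_right'

theorem lintegral_enorm_sub_le [SFinite μ] (hk : IsSymmMarkovDensity μ k)
    (hbdd : ∀ x, BddAbove (Set.range (k x))) {f : α → ℝ} (hf : Integrable f μ) (x₀ : α)
    {s : Set α} (hs : MeasurableSet s) {ε : ℝ}
    (hε : ∀ y ∈ s, ∀ x, |k x x₀ - k x y| ≤ ε * k x x₀) :
    ∫⁻ x, ‖∫ y, k x y * f y ∂μ - (∫ y, f y ∂μ) * k x x₀‖ₑ ∂μ ≤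
      ENNReal.ofReal ε * ∫⁻ y in s, ‖f y‖ₑ ∂μ + 2 * ∫⁻ y in sᶜ, ‖f y‖ₑ ∂μ := by
  simp_rw [hk.integral_mul_sub_eq hf (hbdd _) x₀]
  refine (lintegral_enorm_integral_mul_le
    (hk.measurable.sub (hk.measurable.comp (measurable_fst.prodMk measurable_const)))
    hf.aestronglyMeasurable).trans ?_
  exact lintegral_mul_le_add_compl hf.aestronglyMeasurable.enorm hs
    (fun y hy => hk.lintegral_enorm_sub_le_of_abs_sub_le (hε y hy))
    (fun y _ => hk.lintegral_enorm_sub_le_two y x₀)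

theorem enorm_sub_le (hk : IsSymmMarkovDensity μ k) {x : α} (hbdd : BddAbove (Set.range (k x)))
    {f : α → ℝ} (hf : Integrable f μ) (x₀ : α) {s : Set α} (hs : MeasurableSet s) {ε : ℝ}
    (hε : ∀ y ∈ s, |k x x₀ - k x y| ≤ ε * k x x₀) :
    ‖∫ y, k x y * f y ∂μ - (∫ y, f y ∂μ) * k x x₀‖ₑ ≤
      ENNReal.ofReal (⨆ y, k x y) *
        (ENNReal.ofReal ε * ∫⁻ y in s, ‖f y‖ₑ ∂μ + ∫⁻ y in sᶜ, ‖f y‖ₑ ∂μ) := by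
  have hle : ∀ y, k x y ≤ ⨆ y, k x y := le_ciSup hbdd
  rw [hk.integral_mul_sub_eq hf hbdd x₀, mul_add, ← mul_assoc]
  refine (enorm_integral_le_lintegral_enorm _).trans ?_
  simp_rw [enorm_mul]
  refine lintegral_mul_le_add_compl hf.aestronglyMeasurable.enorm hs (fun y hy => ?_)
    (fun y _ => ?_)
  · calc ‖k x y - k x x₀‖ₑ ≤ ENNReal.ofReal (ε * k x x₀) := by
          rw [Real.enorm_eq_ofReal_abs, abs_sub_comm]; exact ENNReal.ofReal_le_ofReal (hε y hy)
      _ ≤ ENNReal.ofReal ε * ENNReal.ofReal (⨆ y, k x y) := by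
          rw [ENNReal.ofReal_mul' (hk.nonneg x x₀)]; gcongr; exact hle x₀
      _ = _ := mul_comm _ _
  · rw [Real.enorm_eq_ofReal_abs]
    exact ENNReal.ofReal_le_ofReal
      (abs_sub_le_of_nonneg_of_le (hk.nonneg x y) (hle y) (hk.nonneg x x₀) (hle x₀))

end IsSymmMarkovDensity

section Flatness

variable {ι α : Type*} [PseudoMetricSpace α]

-- (P4), with the rate `t ^ (-θ)` replaced by any `e i → 0`.
def IsAsymptoticallyFlatAt (ψ : ι → α → α → ℝ) (l : Filter ι) (x₀ : α) : Prop :=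
  ∀ᶠ R in atTop, ∃ e : ι → ℝ, Tendsto e l (𝓝 0) ∧
    ∀ᶠ i in l, ∀ y ∈ closedBall x₀ R, ∀ x, |ψ i x x₀ - ψ i x y| ≤ e i * ψ i x x₀

theorem isAsymptoticallyFlatAt_of_rpow_neg {ψ : ℝ → α → α → ℝ} {x₀ : α} {θ : ℝ} (hθ : 0 < θ)
    (h : ∀ ξ : ℝ, 0 < ξ → ∃ Cξ t₀ : ℝ, ∀ t : ℝ, t₀ < t → ∀ x y : α,
      dist x₀ y ≤ ξ → |ψ t x x₀ - ψ t x y| ≤ Cξ * t ^ (-θ) * ψ t x x₀) :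
    IsAsymptoticallyFlatAt ψ atTop x₀ := by
  filter_upwards [eventually_gt_atTop 0] with R hR
  obtain ⟨Cξ, t₀, hξ⟩ := h R hR
  refine ⟨fun t => Cξ * t ^ (-θ), by simpa using (tendsto_rpow_neg_atTop hθ).const_mul Cξ, ?_⟩
  filter_upwards [eventually_gt_atTop t₀] with t ht y hy x
  exact hξ t ht x y (dist_comm x₀ y ▸ mem_closedBall.1 hy)

end Flatness

section Asymptotics

variable {ι α : Type*} [PseudoMetricSpace α] [MeasurableSpace α] [OpensMeasurableSpace α]
  {μ : Measure α} {l : Filter ι} {ψ : ι → α → α → ℝ} {f : α → ℝ} {x₀ : α}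

theorem tendsto_lintegral_enorm_kernel_sub [SFinite μ]
    (hψ : ∀ᶠ i in l, IsSymmMarkovDensity μ (ψ i) ∧ ∀ x, BddAbove (Set.range (ψ i x)))
    (hflat : IsAsymptoticallyFlatAt ψ l x₀)
    (hf : Integrable f μ) :
    Tendsto (fun i => ∫⁻ x, ‖∫ y, ψ i x y * f y ∂μ - (∫ y, f y ∂μ) * ψ i x x₀‖ₑ ∂μ) l (𝓝 0) := by
  have hN : ∫⁻ y, ‖f y‖ₑ ∂μ ≠ ∞ := hf.2.ne
  have htail := ENNReal.Tendsto.const_mul (a := 2)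
    (tendsto_setLIntegral_compl_closedBall hN x₀) (Or.inr ENNReal.ofNat_ne_top)
  rw [mul_zero] at htail
  refine tendsto_zero_of_le_add_tail htail ?_
  filter_upwards [hflat] with R ⟨e, he, hle⟩
  refine ⟨fun i => ENNReal.ofReal (e i) * ∫⁻ y, ‖f y‖ₑ ∂μ, ?_, ?_⟩
  · simpa using ENNReal.Tendsto.mul_const (ENNReal.tendsto_ofReal he) (Or.inr hN)
  filter_upwards [hψ, hle] with i ⟨hk, hbdd⟩ hlei
  refine (hk.lintegral_enorm_sub_le hbdd hf x₀ measurableSet_closedBall hlei).trans ?_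
  gcongr
  exact Measure.restrict_le_self

theorem tendsto_iSup_enorm_kernel_sub_mul {w : ι → α → ℝ≥0∞} {C : ℝ≥0∞} (hC : C ≠ ∞)
    (hψ : ∀ᶠ i in l, IsSymmMarkovDensity μ (ψ i) ∧ ∀ x, BddAbove (Set.range (ψ i x)))
    (hw : ∀ᶠ i in l, ∀ x, w i x * ENNReal.ofReal (⨆ y, ψ i x y) ≤ C)
    (hflat : IsAsymptoticallyFlatAt ψ l x₀)
    (hf : Integrable f μ) :
    Tendsto (fun i => ⨆ x, ‖∫ y, ψ i x y * f y ∂μ - (∫ y, f y ∂μ) * ψ i x x₀‖ₑ * w i x) l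
      (𝓝 0) := by
  have hN : ∫⁻ y, ‖f y‖ₑ ∂μ ≠ ∞ := hf.2.ne
  have htail := ENNReal.Tendsto.const_mul (tendsto_setLIntegral_compl_closedBall hN x₀)
    (Or.inr hC)
  rw [mul_zero] at htail
  refine tendsto_zero_of_le_add_tail htail ?_
  filter_upwards [hflat] with R ⟨e, he, hle⟩
  refine ⟨fun i => C * (ENNReal.ofReal (e i) * ∫⁻ y, ‖f y‖ₑ ∂μ), ?_, ?_⟩
  · simpa using ENNReal.Tendsto.const_mul
      (ENNReal.Tendsto.mul_const (ENNReal.tendsto_ofReal he) (Or.inr hN)) (Or.inr hC)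
  filter_upwards [hψ, hw, hle] with i ⟨hk, hbdd⟩ hwi hlei
  refine iSup_le fun x => ?_
  calc ‖∫ y, ψ i x y * f y ∂μ - (∫ y, f y ∂μ) * ψ i x x₀‖ₑ * w i x
      ≤ ENNReal.ofReal (⨆ y, ψ i x y) * (ENNReal.ofReal (e i) *
          ∫⁻ y in closedBall x₀ R, ‖f y‖ₑ ∂μ + ∫⁻ y in (closedBall x₀ R)ᶜ, ‖f y‖ₑ ∂μ) * w i x := by
        gcongr
        exact hk.enorm_sub_le (hbdd x) hf x₀ measurableSet_closedBall fun y hy => hlei y hy x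
    _ = w i x * ENNReal.ofReal (⨆ y, ψ i x y) * (ENNReal.ofReal (e i) *
          ∫⁻ y in closedBall x₀ R, ‖f y‖ₑ ∂μ + ∫⁻ y in (closedBall x₀ R)ᶜ, ‖f y‖ₑ ∂μ) := by ring
    _ ≤ C * (ENNReal.ofReal (e i) * ∫⁻ y, ‖f y‖ₑ ∂μ +
          ∫⁻ y in (closedBall x₀ R)ᶜ, ‖f y‖ₑ ∂μ) := by
        gcongr
        · exact hwi x
        · exact Measure.restrict_le_self
    _ = _ := mul_add _ _ _

end Asymptotics

theorem stmt_0_general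
    {M : Type*} [MetricSpace M] [MeasurableSpace M] [BorelSpace M]
    (μ : Measure M)
    (hVfin : ∀ (x : M) (r : ℝ), 0 < r → μ (ball x r) < ⊤)
    (γ : ℝ)
    (ψ : ℝ → M → M → ℝ)
    (hψmeas : ∀ t : ℝ, 0 < t → Measurable (Function.uncurry (ψ t)))
    -- (P1)
    (hP1 : ∀ t : ℝ, 0 < t → ∀ x y : M, ψ t x y = ψ t y x ∧ 0 < ψ t x y)
    -- (P2)
    (hP2int : ∀ t : ℝ, 0 < t → ∀ x : M, ∫ y, ψ t x y ∂μ = 1)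
    (hP2sup : ∃ c C : ℝ, 0 < c ∧ c ≤ C ∧ ∀ t : ℝ, 0 < t → ∀ x : M,
        c ≤ (μ (ball x (t ^ (1/γ)))).toReal * (⨆ y : M, ψ t x y) ∧
        (μ (ball x (t ^ (1/γ)))).toReal * (⨆ y : M, ψ t x y) ≤ C)
    -- (P4)
    (hP4 : ∃ θ : ℝ, 0 < θ ∧ ∀ ξ : ℝ, 0 < ξ → ∃ Cξ t₀ : ℝ, 0 < Cξ ∧ 0 < t₀ ∧
        ∀ t : ℝ, t₀ < t → ∀ x x₀ y : M, dist x₀ y ≤ ξ →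
          |ψ t x x₀ - ψ t x y| ≤ Cξ * t ^ (-θ) * ψ t x x₀)
    (f : M → ℝ) (hf : Integrable f μ) (x₀ : M) :
    -- (i) L¹ convergence
    Tendsto (fun t : ℝ =>
        ∫ x, |(∫ y, ψ t x y * f y ∂μ) - (∫ y, f y ∂μ) * ψ t x x₀| ∂μ)
      atTop (nhds 0)
    ∧
    -- (ii) weighted sup-norm convergence
    (∀ ε : ℝ, 0 < ε → ∀ᶠ t in (atTop : Filter ℝ), ∀ x : M,
        |(∫ y, ψ t x y * f y ∂μ) - (∫ y, f y ∂μ) * ψ t x x₀| *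
          (μ (ball x (t ^ (1/γ)))).toReal ≤ ε) := by
  obtain ⟨c, C, hc, -, hP2sup⟩ := hP2sup
  obtain ⟨θ, hθ, hP4⟩ := hP4
  have := sigmaFinite_of_measure_ball_lt_top x₀ (hVfin x₀)
  have hV : ∀ t : ℝ, 0 < t → ∀ x, μ (ball x (t ^ (1 / γ))) ≠ ∞ := fun t ht x =>
    (hVfin x _ (rpow_pos_of_pos ht _)).ne
  have hψ : ∀ᶠ t in atTop, IsSymmMarkovDensity μ (ψ t) ∧ ∀ x, BddAbove (Set.range (ψ t x)) := by
    filter_upwards [eventually_gt_atTop 0] with t ht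
    exact ⟨⟨hψmeas t ht, fun x y => (hP1 t ht x y).1, fun x y => (hP1 t ht x y).2.le,
      hP2int t ht⟩, fun x => bddAbove_range_of_pos_le_mul_iSup hc (hP2sup t ht x).1⟩
  have hflat : IsAsymptoticallyFlatAt ψ atTop x₀ := isAsymptoticallyFlatAt_of_rpow_neg hθ
    fun ξ hξ => let ⟨Cξ, t₀, _, _, h⟩ := hP4 ξ hξ; ⟨Cξ, t₀, fun t ht x y => h t ht x x₀ y⟩
  constructor
  · refine ((ENNReal.tendsto_toReal ENNReal.zero_ne_top).comp
      (tendsto_lintegral_enorm_kernel_sub hψ hflat hf)).congr' ?_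
    filter_upwards [hψ] with t ⟨hk, _⟩
    simp_rw [← Real.norm_eq_abs]
    exact (integral_norm_eq_lintegral_enorm ((hk.aestronglyMeasurable_integral_mul hf.1).sub
      ((hk.measurable_left x₀).const_mul _).aestronglyMeasurable)).symm
  · intro ε hε
    have hw : ∀ᶠ t in atTop, ∀ x,
        μ (ball x (t ^ (1 / γ))) * ENNReal.ofReal (⨆ y, ψ t x y) ≤ ENNReal.ofReal C := by
      filter_upwards [eventually_gt_atTop 0] with t ht x
      rw [← ENNReal.ofReal_toReal (hV t ht x), ← ENNReal.ofReal_mul ENNReal.toReal_nonneg]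
      exact ENNReal.ofReal_le_ofReal (hP2sup t ht x).2
    filter_upwards [ENNReal.tendsto_nhds_zero.1 (tendsto_iSup_enorm_kernel_sub_mul
      ENNReal.ofReal_ne_top hψ hw hflat hf) _ (ENNReal.ofReal_pos.2 hε),
      eventually_gt_atTop 0] with t hsup ht x
    have hx := (le_iSup_of_le x le_rfl).trans hsup
    rwa [Real.enorm_eq_ofReal_abs, ← ENNReal.ofReal_toReal (hV t ht x),
      ← ENNReal.ofReal_mul (abs_nonneg _), ENNReal.ofReal_le_ofReal_iff hε.le] at hx

/-- Convergence to the fundamental solution for kernels in the class `P_γ`: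
`L¹` convergence and (weighted) sup-norm convergence as `t → ∞`. -/
theorem stmt_0
    {M : Type*} [MetricSpace M] [ProperSpace M] [MeasurableSpace M] [BorelSpace M]
    (μ : Measure M)
    (hVpos : ∀ (x : M) (r : ℝ), 0 < r → 0 < μ (ball x r))
    (hVfin : ∀ (x : M) (r : ℝ), 0 < r → μ (ball x r) < ⊤)
    (γ : ℝ) (hγ : 0 < γ)
    (ψ : ℝ → M → M → ℝ)
    (hψmeas : ∀ t : ℝ, 0 < t → Measurable (Function.uncurry (ψ t)))
    -- (P1)
    (hP1 : ∀ t : ℝ, 0 < t → ∀ x y : M, ψ t x y = ψ t y x ∧ 0 < ψ t x y)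
    -- (P2)
    (hP2int : ∀ t : ℝ, 0 < t → ∀ x : M, ∫ y, ψ t x y ∂μ = 1)
    (hP2sup : ∃ c C : ℝ, 0 < c ∧ c ≤ C ∧ ∀ t : ℝ, 0 < t → ∀ x : M,
        c ≤ (μ (ball x (t ^ (1/γ)))).toReal * (⨆ y : M, ψ t x y) ∧
        (μ (ball x (t ^ (1/γ)))).toReal * (⨆ y : M, ψ t x y) ≤ C)
    -- (P3)
    (hP3 : ∃ C : ℝ, 1 ≤ C ∧ ∀ t : ℝ, 0 < t → ∀ x y x₀ : M, dist x₀ y ≤ t ^ (1/γ) →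
        C⁻¹ ≤ ψ t x y / ψ t x x₀ ∧ ψ t x y / ψ t x x₀ ≤ C)
    -- (P4)
    (hP4 : ∃ θ : ℝ, 0 < θ ∧ ∀ ξ : ℝ, 0 < ξ → ∃ Cξ t₀ : ℝ, 0 < Cξ ∧ 0 < t₀ ∧
        ∀ t : ℝ, t₀ < t → ∀ x x₀ y : M, dist x₀ y ≤ ξ →
          |ψ t x x₀ - ψ t x y| ≤ Cξ * t ^ (-θ) * ψ t x x₀)
    (f : M → ℝ) (hf : Integrable f μ) (x₀ : M) :
    -- (i) L¹ convergence
    Tendsto (fun t : ℝ =>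
        ∫ x, |(∫ y, ψ t x y * f y ∂μ) - (∫ y, f y ∂μ) * ψ t x x₀| ∂μ)
      atTop (nhds 0)
    ∧
    -- (ii) weighted sup-norm convergence
    (∀ ε : ℝ, 0 < ε → ∀ᶠ t in (atTop : Filter ℝ), ∀ x : M,
        |(∫ y, ψ t x y * f y ∂μ) - (∫ y, f y ∂μ) * ψ t x x₀| *
          (μ (ball x (t ^ (1/γ)))).toReal ≤ ε) :=
  stmt_0_general μ hVfin γ ψ hψmeas hP1 hP2int hP2sup hP4 f hf x₀
end

section
/- Fix γ > 0, a base point x₀ ∈ M, and a family (ψ_t)_{t>0} of measurable kernels in the class P_γ on M, with exponent θ_γ as in (P4). Let ξ > 0 and let f be a continuous function supported in the ball B(x₀,ξ), with M_f = ∫_M f dμ, and set K_t f(x) = ∫_M ψ_t(x,y) f(y) dμ(y). Then there exist constants C = C(ξ,γ,f) > 0 and t₀ = t₀(ξ,γ) > 0 such that for all t > t₀: (i) ∫_M |K_t f(x) − M_f ψ_t(x,x₀)| dμ(x) ≤ C t^{−θ_γ}, and (ii) sup_{x ∈ M} |K_t f(x) − M_f ψ_t(x,x₀)| · V(x, t^{1/γ})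 ≤ C t^{−θ_γ}. -/
open MeasureTheory Metric Real Filter

/-- Rate of convergence `O(t^{-θ_γ})` for continuous initial data supported in a
ball `B(x₀, ξ)`, for kernels in the class `P_γ`. -/
theorem stmt_2
    {M : Type*} [MetricSpace M] [MeasurableSpace M] [BorelSpace M]
    (μ : Measure M)
    (hVpos : ∀ (x : M) (r : ℝ), 0 < r → 0 < μ (ball x r))
    (hVfin : ∀ (x : M) (r : ℝ), 0 < r → μ (ball x r) < ⊤)
    (γ : ℝ) (hγ : 0 < γ)
    (x₀ : M)
    (ψ : ℝ → M → M → ℝ)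
    (hψmeas : ∀ t : ℝ, 0 < t → Measurable (Function.uncurry (ψ t)))
    -- (P1)
    (hP1 : ∀ t : ℝ, 0 < t → ∀ x y : M, ψ t x y = ψ t y x ∧ 0 < ψ t x y)
    -- (P2)
    (hP2int : ∀ t : ℝ, 0 < t → ∀ x : M, ∫ y, ψ t x y ∂μ = 1)
    (hP2sup : ∃ c C : ℝ, 0 < c ∧ c ≤ C ∧ ∀ t : ℝ, 0 < t → ∀ x : M,
        c ≤ (μ (ball x (t ^ (1/γ)))).toReal * (⨆ y : M, ψ t x y) ∧
        (μ (ball x (t ^ (1/γ)))).toReal * (⨆ y : M, ψ t x y) ≤ C)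
    -- (P3)
    (hP3 : ∃ C : ℝ, 1 ≤ C ∧ ∀ t : ℝ, 0 < t → ∀ x y z : M, dist z y ≤ t ^ (1/γ) →
        C⁻¹ ≤ ψ t x y / ψ t x z ∧ ψ t x y / ψ t x z ≤ C)
    -- (P4), with its exponent `θγ` fixed
    (θγ : ℝ) (hθγ : 0 < θγ)
    (hP4 : ∀ ζ : ℝ, 0 < ζ → ∃ Cζ t₁ : ℝ, 0 < Cζ ∧ 0 < t₁ ∧
        ∀ t : ℝ, t₁ < t → ∀ x z y : M, dist z y ≤ ζ →
          |ψ t x z - ψ t x y| ≤ Cζ * t ^ (-θγ) * ψ t x z)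
    -- continuous initial datum supported in `B(x₀, ξ)`
    (ξ : ℝ) (hξ : 0 < ξ)
    (f : M → ℝ) (hfc : Continuous f) (hsupp : ∀ x : M, x ∉ ball x₀ ξ → f x = 0) :
    ∃ C t₀ : ℝ, 0 < C ∧ 0 < t₀ ∧ ∀ t : ℝ, t₀ < t →
      -- (i) L¹ estimate
      (∫ x, |(∫ y, ψ t x y * f y ∂μ) - (∫ y, f y ∂μ) * ψ t x x₀| ∂μ) ≤ C * t ^ (-θγ)
      ∧
      -- (ii) weighted sup estimate
      (∀ x : M,
        |(∫ y, ψ t x y * f y ∂μ) - (∫ y, f y ∂μ) * ψ t x x₀| *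
          (μ (ball x (t ^ (1/γ)))).toReal ≤ C * t ^ (-θγ)) := by

  obtain ⟨C3, hC3one, hC3⟩ := hP3
  obtain ⟨c, C2, hc, hcC2, hP2'⟩ := hP2sup
  obtain ⟨Cξ, t₁, hCξ, ht₁, hP4'⟩ := hP4 ξ hξ
  have hC30 : (0:ℝ) < C3 := lt_of_lt_of_le one_pos hC3one
  have hC20 : (0:ℝ) < C2 := lt_of_lt_of_le hc hcC2
  set L := ∫ y, |f y| ∂μ with hLdef
  have hL0 : 0 ≤ L := integral_nonneg fun y => abs_nonneg _
  refine ⟨Cξ * L * C2 + Cξ * L + 1, max t₁ (max (ξ ^ γ) 1), by positivity,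
    lt_of_lt_of_le ht₁ (le_max_left _ _), ?_⟩
  intro t ht
  have ht1 : t₁ < t := lt_of_le_of_lt (le_max_left _ _) ht
  have htpos : (0:ℝ) < t :=
    lt_of_lt_of_le one_pos (le_of_lt (lt_of_le_of_lt (le_trans (le_max_right _ _) (le_max_right _ _)) ht))
  have htθ : (0:ℝ) < t ^ (-θγ) := Real.rpow_pos_of_pos htpos _
  have hξt : ξ ≤ t ^ (1/γ) := by
    have h1 : ξ ^ γ ≤ t :=
      le_of_lt (lt_of_le_of_lt (le_trans (le_max_left _ _) (le_max_right _ _)) ht)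
    have h2 : (ξ ^ γ) ^ (1/γ) ≤ t ^ (1/γ) :=
      Real.rpow_le_rpow (by positivity) h1 (by positivity)
    calc ξ = (ξ ^ γ) ^ (1/γ) := by
            rw [← Real.rpow_mul hξ.le, mul_one_div_cancel hγ.ne', Real.rpow_one]
      _ ≤ t ^ (1/γ) := h2
  have hψpos : ∀ x y : M, 0 < ψ t x y := fun x y => (hP1 t htpos x y).2
  have hψsymm : ∀ x y : M, ψ t x y = ψ t y x := fun x y => (hP1 t htpos x y).1
  -- comparison on the ball
  have hub : ∀ x y : M, y ∈ ball x₀ ξ → ψ t x y ≤ C3 * ψ t x x₀ := by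
    intro x y hy
    have hd : dist x₀ y ≤ t ^ (1/γ) := by
      rw [dist_comm]; exact le_trans (le_of_lt (mem_ball.mp hy)) hξt
    have := (hC3 t htpos x y x₀ hd).2
    have h0 := hψpos x x₀
    rw [div_le_iff₀ h0] at this
    linarith [this, mul_comm (ψ t x x₀) C3]
  have hlb : ∀ x y : M, y ∈ ball x₀ ξ → ψ t x x₀ ≤ C3 * ψ t x y := by
    intro x y hy
    have hd : dist x₀ y ≤ t ^ (1/γ) := by
      rw [dist_comm]; exact le_trans (le_of_lt (mem_ball.mp hy)) hξt
    have h := (hC3 t htpos x y x₀ hd).1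
    have h0 := hψpos x x₀
    rw [le_div_iff₀ h0] at h
    have h2 := mul_le_mul_of_nonneg_left h hC30.le
    rw [← mul_assoc, mul_inv_cancel₀ hC30.ne', one_mul] at h2
    exact h2
  by_cases hf : Integrable f μ
  · -- integrable case
    have hkey : ∀ x : M,
        |(∫ y, ψ t x y * f y ∂μ) - (∫ y, f y ∂μ) * ψ t x x₀|
          ≤ Cξ * t ^ (-θγ) * L * ψ t x x₀ := by
      intro x
      have hmeasx : Measurable fun y => ψ t x y :=
        (hψmeas t htpos).comp measurable_prodMk_left
      have hint1 : Integrable (fun y => ψ t x y * f y) μ := by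
        refine ((hf.abs.const_mul (C3 * ψ t x x₀)).mono'
          (hmeasx.mul hfc.measurable).aestronglyMeasurable (ae_of_all _ ?_))
        intro y
        by_cases hy : y ∈ ball x₀ ξ
        · have := hub x y hy
          have h1 := hψpos x y
          have h2 := abs_nonneg (f y)
          rw [Real.norm_eq_abs, abs_mul, abs_of_pos h1, mul_assoc]
          nlinarith
        · simp [hsupp y hy]
      have hint2 : Integrable (fun y => ψ t x x₀ * f y) μ := hf.const_mul _
      have hrw : (∫ y, f y ∂μ) * ψ t x x₀ = ∫ y, ψ t x x₀ * f y ∂μ := by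
        rw [integral_const_mul]; ring
      rw [hrw, ← integral_sub hint1 hint2]
      have hbound : ∀ y : M, ‖ψ t x y * f y - ψ t x x₀ * f y‖
          ≤ Cξ * t ^ (-θγ) * ψ t x x₀ * |f y| := by
        intro y
        by_cases hy : y ∈ ball x₀ ξ
        · have hd : dist x₀ y ≤ ξ := by
            rw [dist_comm]; exact le_of_lt (mem_ball.mp hy)
          have h4 := hP4' t ht1 x x₀ y hd
          have : ψ t x y * f y - ψ t x x₀ * f y = (ψ t x x₀ - ψ t x y) * (-(f y)) := by ring
          rw [Real.norm_eq_abs, this, abs_mul, abs_neg]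
          exact mul_le_mul_of_nonneg_right h4 (abs_nonneg _)
        · simp only [hsupp y hy, mul_zero, sub_zero, norm_zero, abs_zero]
          positivity
      calc |∫ y, (ψ t x y * f y - ψ t x x₀ * f y) ∂μ|
          ≤ ∫ y, ‖ψ t x y * f y - ψ t x x₀ * f y‖ ∂μ := by
            rw [← Real.norm_eq_abs]; exact norm_integral_le_integral_norm _
        _ ≤ ∫ y, Cξ * t ^ (-θγ) * ψ t x x₀ * |f y| ∂μ := by
            refine integral_mono_of_nonneg (ae_of_all _ fun y => norm_nonneg _)
              ((hf.abs.const_mul _)) (ae_of_all _ hbound)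
        _ = Cξ * t ^ (-θγ) * ψ t x x₀ * L := by rw [integral_const_mul]
        _ = Cξ * t ^ (-θγ) * L * ψ t x x₀ := by ring
    have hψint : Integrable (fun x => ψ t x₀ x) μ := by
      by_contra hcon
      have h := hP2int t htpos x₀
      rw [integral_undef hcon] at h
      exact one_ne_zero h.symm
    refine ⟨?_, ?_⟩
    · -- (i)
      have hψint' : Integrable (fun x => Cξ * t ^ (-θγ) * L * ψ t x x₀) μ := by
        have : (fun x => Cξ * t ^ (-θγ) * L * ψ t x x₀)
            = fun x => Cξ * t ^ (-θγ) * L * ψ t x₀ x := by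
          funext x; rw [hψsymm x x₀]
        rw [this]; exact hψint.const_mul _
      calc (∫ x, |(∫ y, ψ t x y * f y ∂μ) - (∫ y, f y ∂μ) * ψ t x x₀| ∂μ)
          ≤ ∫ x, Cξ * t ^ (-θγ) * L * ψ t x x₀ ∂μ := by
            exact integral_mono_of_nonneg (ae_of_all _ fun x => abs_nonneg _)
              hψint' (ae_of_all _ hkey)
        _ = ∫ x, Cξ * t ^ (-θγ) * L * ψ t x₀ x ∂μ := by
            congr 1; funext x; rw [hψsymm x x₀]
        _ = Cξ * t ^ (-θγ) * L * ∫ x, ψ t x₀ x ∂μ := integral_const_mul _ _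
        _ = Cξ * t ^ (-θγ) * L := by rw [hP2int t htpos x₀, mul_one]
        _ ≤ (Cξ * L * C2 + Cξ * L + 1) * t ^ (-θγ) := by
            nlinarith [mul_nonneg (mul_nonneg hCξ.le hL0) hC20.le, htθ.le,
              mul_nonneg (mul_nonneg (mul_nonneg hCξ.le hL0) hC20.le) htθ.le]
    · -- (ii)
      intro x
      have hbdd : BddAbove (Set.range fun y => ψ t x y) := by
        by_contra hcon
        have h := (hP2' t htpos x).1
        rw [Real.iSup_of_not_bddAbove hcon, mul_zero] at h
        linarith
      have hle : ψ t x x₀ ≤ ⨆ y, ψ t x y := le_ciSup hbdd x₀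
      have hV0 : 0 ≤ (μ (ball x (t ^ (1/γ)))).toReal := ENNReal.toReal_nonneg
      have hψV : ψ t x x₀ * (μ (ball x (t ^ (1/γ)))).toReal ≤ C2 := by
        have h2 := (hP2' t htpos x).2
        nlinarith
      have hB0 : 0 ≤ Cξ * t ^ (-θγ) * L := by positivity
      calc |(∫ y, ψ t x y * f y ∂μ) - (∫ y, f y ∂μ) * ψ t x x₀| *
            (μ (ball x (t ^ (1/γ)))).toReal
          ≤ (Cξ * t ^ (-θγ) * L * ψ t x x₀) * (μ (ball x (t ^ (1/γ)))).toReal :=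
            mul_le_mul_of_nonneg_right (hkey x) hV0
        _ = (Cξ * t ^ (-θγ) * L) * (ψ t x x₀ * (μ (ball x (t ^ (1/γ)))).toReal) := by ring
        _ ≤ (Cξ * t ^ (-θγ) * L) * C2 := mul_le_mul_of_nonneg_left hψV hB0
        _ ≤ (Cξ * L * C2 + Cξ * L + 1) * t ^ (-θγ) := by
            nlinarith [mul_nonneg hCξ.le hL0, htθ.le,
              mul_nonneg (mul_nonneg hCξ.le hL0) htθ.le]
  · -- non-integrable case: both integrals are junk 0
    have hf0 : (∫ y, f y ∂μ) = 0 := integral_undef hf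
    have h0 : ∀ x : M, (∫ y, ψ t x y * f y ∂μ) = 0 := by
      intro x
      refine integral_undef ?_
      intro hcon
      apply hf
      refine (hcon.abs.const_mul (C3 / ψ t x x₀)).mono'
        hfc.aestronglyMeasurable (ae_of_all _ ?_)
      intro y
      by_cases hy : y ∈ ball x₀ ξ
      · have h1 := hlb x y hy
        have h2 := hψpos x y
        have h3 := hψpos x x₀
        rw [Real.norm_eq_abs, abs_mul, abs_of_pos h2, div_mul_eq_mul_div, le_div_iff₀ h3]
        nlinarith [abs_nonneg (f y)]
      · simp [hsupp y hy]
    have hzero : ∀ x : M,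
        |(∫ y, ψ t x y * f y ∂μ) - (∫ y, f y ∂μ) * ψ t x x₀| = 0 := by
      intro x; rw [h0 x, hf0]; simp
    constructor
    · simp only [hzero]
      rw [integral_zero]
      positivity
    · intro x
      rw [hzero x, zero_mul]
      positivity
end

section
/- For every c > 0 and κ > 1 there exist constants 0 < c' ≤ C' (depending only on c, κ and the volume comparability constants) such that for all x, y ∈ M and all t > 0: c' ≤ V(x, t + d(x,y)) · (t + d(x,y))^{2(κ−1)} · ∫₀^∞ V(x,√u)^{−1} exp(−t²/(4u)) exp(−c d(x,y)²/u) u^{−κ} du ≤ C'. -/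
/-!
Put `ρ = t + d(x,y)` and `V(r) = V(x,r)`. The substitution `u = ρ² s` turns the quantity into
`∫₀^∞ V(ρ)/V(ρ√s) · e^{-b/s} s^{-κ} ds` with `b = (t²/4 + c d(x,y)²)/ρ²`, and `b` lies between
`ε = min(1/4, c)/2` and `1/4 + c`. Doubling (for `s < 1`) and reverse doubling (for `s ≥ 1`) bound
`V(ρ)/V(ρ√s)` by `C₀ s^{-ν/2} + c₀⁻¹`, so the integrand is dominated by the integrable function
`(C₀ s^{-ν/2} + c₀⁻¹) e^{-ε/s} s^{-κ}`, independent of `x`, `y`, `t`. On `s ∈ (1, 2]` every factor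
of the integrand is bounded below by a constant, which gives the lower bound.
-/

open MeasureTheory Metric Real Filter Set

lemma integrableOn_exp_neg_div_mul_rpow_neg {ε p : ℝ} (hε : 0 < ε) (hp : 1 < p) :
    IntegrableOn (fun s : ℝ => exp (-ε / s) * s ^ (-p)) (Ioi 0) := by
  -- substitute `s = v⁻¹` in the Gamma-type integral `∫ v ^ (p - 2) * exp (-ε * v) dv`
  have hv := (integrableOn_Ioi_comp_rpow_iff' _ (by norm_num : (-1 : ℝ) ≠ 0)).mpr
    (integrableOn_rpow_mul_exp_neg_mul_rpow (s := p - 2) (by linarith) one_pos hε)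
  refine hv.congr_fun (fun s (hs : 0 < s) => ?_) measurableSet_Ioi
  simp only [smul_eq_mul, rpow_one, rpow_neg_one]
  rw [inv_rpow hs.le, ← rpow_neg hs.le, ← mul_assoc, ← rpow_add hs, mul_comm, neg_mul,
    ← div_eq_mul_inv]
  ring_nf

lemma integrableOn_rpow_add_mul_exp_neg_div_mul_rpow_neg {C a ν κ ε : ℝ} (hν : 0 ≤ ν)
    (hκ : 1 < κ) (hε : 0 < ε) :
    IntegrableOn (fun s : ℝ => (C * s ^ (-(ν / 2)) + a) * exp (-ε / s) * s ^ (-κ)) (Ioi 0) := by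
  have hsum : IntegrableOn (fun s : ℝ => C * (exp (-ε / s) * s ^ (-(κ + ν / 2))) +
      a * (exp (-ε / s) * s ^ (-κ))) (Ioi 0) :=
    ((integrableOn_exp_neg_div_mul_rpow_neg hε (by linarith)).const_mul C).add
      ((integrableOn_exp_neg_div_mul_rpow_neg hε hκ).const_mul a)
  refine hsum.congr_fun (fun s (hs : 0 < s) => ?_) measurableSet_Ioi
  simp only [neg_add, rpow_add hs]
  ring

lemma rpow_sub_one_mul_integral_Ioi_mul_rpow_neg (h : ℝ → ℝ) {a : ℝ} (ha : 0 < a) (κ : ℝ) :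
    a ^ (κ - 1) * ∫ u in Ioi 0, h u * u ^ (-κ) = ∫ s in Ioi 0, h (a * s) * s ^ (-κ) := by
  have hsub := integral_comp_mul_left_Ioi (fun u => h u * u ^ (-κ)) 0 ha
  rw [mul_zero, smul_eq_mul] at hsub
  have hpull : ∫ s in Ioi 0, h (a * s) * s ^ (-κ)
      = a ^ κ * ∫ s in Ioi 0, h (a * s) * (a * s) ^ (-κ) := by
    rw [← integral_const_mul]
    refine setIntegral_congr_fun measurableSet_Ioi fun s (hs : 0 < s) => ?_
    have : 0 < a ^ κ := rpow_pos_of_pos ha κ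
    rw [mul_rpow ha.le hs.le, rpow_neg ha.le]
    field_simp
  rw [hpull, hsub, ← mul_assoc, rpow_sub_one ha.ne', div_eq_mul_inv]

lemma mul_rpow_mul_integral_eq_integral_div (V : ℝ → ℝ) {ρ : ℝ} (hρ : 0 < ρ) (κ t c d : ℝ) :
    V ρ * ρ ^ (2 * (κ - 1)) * ∫ u in Ioi 0, (V √u)⁻¹ * exp (-(t ^ 2) / (4 * u)) *
        exp (-c * d ^ 2 / u) * u ^ (-κ) =
      ∫ s in Ioi 0, V ρ / V (ρ * √s) * exp (-((t ^ 2 / 4 + c * d ^ 2) / ρ ^ 2) / s) *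
        s ^ (-κ) := by
  have hpow : ρ ^ (2 * (κ - 1)) = (ρ ^ 2) ^ (κ - 1) := by
    rw [← rpow_natCast, ← rpow_mul hρ.le]; norm_num
  rw [mul_assoc, hpow, rpow_sub_one_mul_integral_Ioi_mul_rpow_neg
    (fun u => (V √u)⁻¹ * exp (-(t ^ 2) / (4 * u)) * exp (-c * d ^ 2 / u)) (by positivity),
    ← integral_const_mul]
  refine setIntegral_congr_fun measurableSet_Ioi fun s (hs : 0 < s) => ?_
  have hexp : exp (-(t ^ 2) / (4 * (ρ ^ 2 * s))) * exp (-c * d ^ 2 / (ρ ^ 2 * s)) =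
      exp (-((t ^ 2 / 4 + c * d ^ 2) / ρ ^ 2) / s) := by
    rw [← exp_add]
    congr 1
    field_simp
    ring
  simp only [sqrt_mul (sq_nonneg ρ), sqrt_sq hρ.le, mul_assoc, hexp]
  ring

lemma min_div_two_mul_sq_le {c t d : ℝ} (hc : 0 ≤ c) :
    min (1/4) c / 2 * (t + d) ^ 2 ≤ t ^ 2 / 4 + c * d ^ 2 := by
  have hm : 0 ≤ min (1/4 : ℝ) c := le_min (by norm_num) hc
  have ht : min (1/4) c * t ^ 2 ≤ t ^ 2 / 4 := by
    nlinarith [min_le_left (1/4 : ℝ) c, sq_nonneg t]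
  have hd : min (1/4) c * d ^ 2 ≤ c * d ^ 2 :=
    mul_le_mul_of_nonneg_right (min_le_right _ _) (sq_nonneg d)
  nlinarith [mul_nonneg hm (sq_nonneg (t - d))]

lemma sq_div_four_add_mul_sq_le {c t d : ℝ} (hc : 0 ≤ c) (ht : 0 ≤ t) (hd : 0 ≤ d) :
    t ^ 2 / 4 + c * d ^ 2 ≤ (1/4 + c) * (t + d) ^ 2 := by
  nlinarith [mul_nonneg hc (mul_nonneg ht hd), mul_nonneg ht hd]

def VolumeComparable (V : ℝ → ℝ) (ν ν' c₀ C₀ : ℝ) : Prop :=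
  ∀ r R, 0 < r → r ≤ R → c₀ * (R / r) ^ ν' ≤ V R / V r ∧ V R / V r ≤ C₀ * (R / r) ^ ν

namespace VolumeComparable

variable {V : ℝ → ℝ} {ν ν' c₀ C₀ : ℝ}

lemma div_le_rpow_add_inv (hVC : VolumeComparable V ν ν' c₀ C₀) (hc₀ : 0 < c₀) (hC₀ : 0 ≤ C₀)
    (hν' : 0 ≤ ν') {r R : ℝ} (hr : 0 < r) (hR : 0 < R) :
    V R / V r ≤ C₀ * (R / r) ^ ν + c₀⁻¹ := by
  rcases le_total r R with hrR | hRr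
  · exact (hVC r R hr hrR).2.trans (le_add_of_nonneg_right (inv_nonneg.2 hc₀.le))
  · have hone : 1 ≤ (r / R) ^ ν' := one_le_rpow ((one_le_div hR).2 hRr) hν'
    have hrev : c₀ ≤ V r / V R := by nlinarith [(hVC R r hR hRr).1]
    calc V R / V r = (V r / V R)⁻¹ := (inv_div _ _).symm
      _ ≤ c₀⁻¹ := inv_anti₀ hc₀ hrev
      _ ≤ C₀ * (R / r) ^ ν + c₀⁻¹ := le_add_of_nonneg_left (by positivity)

lemma inv_le_div_mul_sqrt (hVC : VolumeComparable V ν ν' c₀ C₀) (hV : ∀ r, 0 < r → 0 < V r)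
    (hν : 0 ≤ ν) {ρ s : ℝ} (hρ : 0 < ρ) (hs : s ∈ Ioc 1 2) :
    (C₀ * √2 ^ ν)⁻¹ ≤ V ρ / V (ρ * √s) := by
  have hsqrt : 1 ≤ √s := one_le_sqrt.2 hs.1.le
  have hup := (hVC ρ (ρ * √s) hρ (le_mul_of_one_le_right hρ.le hsqrt)).2
  rw [mul_div_cancel_left₀ _ hρ.ne'] at hup
  have hpos : 0 < V (ρ * √s) / V ρ := div_pos (hV _ (by positivity)) (hV ρ hρ)
  calc (C₀ * √2 ^ ν)⁻¹ ≤ (V (ρ * √s) / V ρ)⁻¹ := by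
        refine inv_anti₀ hpos (hup.trans ?_)
        have : 0 < C₀ := pos_of_mul_pos_left (hpos.trans_le hup) (by positivity)
        gcongr
        exact hs.2
    _ = V ρ / V (ρ * √s) := inv_div _ _

variable {κ ρ b : ℝ}

lemma div_mul_exp_mul_rpow_nonneg (hV : ∀ r, 0 < r → 0 < V r) (hρ : 0 < ρ) {s : ℝ}
    (hs : 0 < s) : 0 ≤ V ρ / V (ρ * √s) * exp (-b / s) * s ^ (-κ) := by
  have := hV ρ hρ
  have := hV (ρ * √s) (by positivity)
  positivity

lemma div_mul_exp_mul_rpow_le (hVC : VolumeComparable V ν ν' c₀ C₀) (hc₀ : 0 < c₀)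
    (hC₀ : 0 ≤ C₀) (hν' : 0 ≤ ν') {ε s : ℝ} (hρ : 0 < ρ) (hεb : ε ≤ b) (hs : 0 < s) :
    V ρ / V (ρ * √s) * exp (-b / s) * s ^ (-κ) ≤
      (C₀ * s ^ (-(ν / 2)) + c₀⁻¹) * exp (-ε / s) * s ^ (-κ) := by
  have hratio := hVC.div_le_rpow_add_inv hc₀ hC₀ hν' (by positivity : 0 < ρ * √s) hρ
  have hpow : (ρ / (ρ * √s)) ^ ν = s ^ (-(ν / 2)) := by
    rw [div_mul_cancel_left₀ hρ.ne', sqrt_eq_rpow, inv_rpow (by positivity), ← rpow_mul hs.le,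
      rpow_neg hs.le]
    ring_nf
  rw [hpow] at hratio
  gcongr

lemma integrableOn_div_mul_exp_mul_rpow (hVC : VolumeComparable V ν ν' c₀ C₀)
    (hVm : Measurable V) (hV : ∀ r, 0 < r → 0 < V r) (hc₀ : 0 < c₀) (hC₀ : 0 ≤ C₀)
    (hν' : 0 ≤ ν') (hν : 0 ≤ ν) (hκ : 1 < κ) (hρ : 0 < ρ) (hb : 0 < b) :
    IntegrableOn (fun s => V ρ / V (ρ * √s) * exp (-b / s) * s ^ (-κ)) (Ioi 0) := by
  refine Integrable.mono'
    (integrableOn_rpow_add_mul_exp_neg_div_mul_rpow_neg (C := C₀) (a := c₀⁻¹) hν hκ hb)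
    ?_ ((ae_restrict_iff' measurableSet_Ioi).2 (Eventually.of_forall fun s (hs : 0 < s) => ?_))
  · exact Measurable.aestronglyMeasurable (by fun_prop)
  · rw [norm_of_nonneg (div_mul_exp_mul_rpow_nonneg hV hρ hs)]
    exact hVC.div_mul_exp_mul_rpow_le hc₀ hC₀ hν' hρ le_rfl hs

lemma integral_div_mul_exp_mul_rpow_le (hVC : VolumeComparable V ν ν' c₀ C₀)
    (hV : ∀ r, 0 < r → 0 < V r) (hc₀ : 0 < c₀) (hC₀ : 0 ≤ C₀) (hν' : 0 ≤ ν') (hν : 0 ≤ ν)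
    (hκ : 1 < κ) {ε : ℝ} (hε : 0 < ε) (hρ : 0 < ρ) (hεb : ε ≤ b) :
    ∫ s in Ioi 0, V ρ / V (ρ * √s) * exp (-b / s) * s ^ (-κ) ≤
      ∫ s in Ioi 0, (C₀ * s ^ (-(ν / 2)) + c₀⁻¹) * exp (-ε / s) * s ^ (-κ) := by
  refine integral_mono_of_nonneg ((ae_restrict_iff' measurableSet_Ioi).2
    (Eventually.of_forall fun s (hs : 0 < s) => div_mul_exp_mul_rpow_nonneg hV hρ hs))
    (integrableOn_rpow_add_mul_exp_neg_div_mul_rpow_neg hν hκ hε)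
    ((ae_restrict_iff' measurableSet_Ioi).2 (Eventually.of_forall fun s (hs : 0 < s) =>
      hVC.div_mul_exp_mul_rpow_le hc₀ hC₀ hν' hρ hεb hs))

lemma le_integral_div_mul_exp_mul_rpow (hVC : VolumeComparable V ν ν' c₀ C₀)
    (hVm : Measurable V) (hV : ∀ r, 0 < r → 0 < V r) (hc₀ : 0 < c₀) (hC₀ : 0 ≤ C₀)
    (hν' : 0 ≤ ν') (hν : 0 ≤ ν) (hκ : 1 < κ) (hρ : 0 < ρ) (hb : 0 < b) {B : ℝ} (hbB : b ≤ B) :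
    (C₀ * √2 ^ ν)⁻¹ * exp (-B) * 2 ^ (-κ) ≤
      ∫ s in Ioi 0, V ρ / V (ρ * √s) * exp (-b / s) * s ^ (-κ) := by
  have hint := hVC.integrableOn_div_mul_exp_mul_rpow hVm hV hc₀ hC₀ hν' hν hκ hρ hb
  have hsub : Ioc (1 : ℝ) 2 ⊆ Ioi 0 := Ioc_subset_Ioi_self.trans (Ioi_subset_Ioi zero_le_one)
  have hlow : ∀ s ∈ Ioc (1 : ℝ) 2, (C₀ * √2 ^ ν)⁻¹ * exp (-B) * 2 ^ (-κ) ≤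
      V ρ / V (ρ * √s) * exp (-b / s) * s ^ (-κ) := by
    intro s hs
    have hs0 : 0 < s := one_pos.trans hs.1
    have hexp : exp (-B) ≤ exp (-b / s) := by
      rw [exp_le_exp, neg_div, neg_le_neg_iff]
      exact (div_le_self hb.le hs.1.le).trans hbB
    have := hV ρ hρ
    have := hV (ρ * √s) (by positivity)
    gcongr ?_ * ?_ * ?_
    · exact hVC.inv_le_div_mul_sqrt hV hν hρ hs
    · exact rpow_le_rpow_of_nonpos hs0 hs.2 (by linarith)
  calc (C₀ * √2 ^ ν)⁻¹ * exp (-B) * 2 ^ (-κ)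
      = ((C₀ * √2 ^ ν)⁻¹ * exp (-B) * 2 ^ (-κ)) * volume.real (Ioc (1 : ℝ) 2) := by
        rw [volume_real_Ioc_of_le one_le_two]; norm_num
    _ ≤ ∫ s in Ioc 1 2, V ρ / V (ρ * √s) * exp (-b / s) * s ^ (-κ) :=
        setIntegral_ge_of_const_le_real measurableSet_Ioc measure_Ioc_lt_top.ne hlow
          (hint.mono_set hsub)
    _ ≤ ∫ s in Ioi 0, V ρ / V (ρ * √s) * exp (-b / s) * s ^ (-κ) :=
        setIntegral_mono_set hint ((ae_restrict_iff' measurableSet_Ioi).2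
          (Eventually.of_forall fun s (hs : 0 < s) => div_mul_exp_mul_rpow_nonneg hV hρ hs))
          hsub.eventuallyLE

end VolumeComparable

theorem stmt_3_general
    {M : Type*} [MetricSpace M] [MeasurableSpace M]
    (μ : Measure M)
    (hVpos : ∀ (x : M) (r : ℝ), 0 < r → 0 < μ (ball x r))
    (hVfin : ∀ (x : M) (r : ℝ), 0 < r → μ (ball x r) < ⊤)
    -- volume comparability
    (ν ν' c₀ C₀ : ℝ) (hν' : 0 < ν') (hνν : ν' ≤ ν) (hc₀ : 0 < c₀) (hc₀C₀ : c₀ ≤ C₀)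
    (hdoub : ∀ (x : M) (r R : ℝ), 0 < r → r ≤ R →
        c₀ * (R/r) ^ ν' ≤ (μ (ball x R)).toReal / (μ (ball x r)).toReal ∧
        (μ (ball x R)).toReal / (μ (ball x r)).toReal ≤ C₀ * (R/r) ^ ν) :
    ∀ c : ℝ, 0 < c → ∀ κ : ℝ, 1 < κ →
      ∃ c' C' : ℝ, 0 < c' ∧ c' ≤ C' ∧ ∀ (x y : M) (t : ℝ), 0 < t →
        c' ≤ (μ (ball x (t + dist x y))).toReal * (t + dist x y) ^ (2*(κ-1)) *
              ∫ u in Set.Ioi (0:ℝ),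
                ((μ (ball x (Real.sqrt u))).toReal)⁻¹ * Real.exp (-(t^2)/(4*u)) *
                  Real.exp (-c * (dist x y)^2 / u) * u ^ (-κ) ∧
        (μ (ball x (t + dist x y))).toReal * (t + dist x y) ^ (2*(κ-1)) *
              (∫ u in Set.Ioi (0:ℝ),
                ((μ (ball x (Real.sqrt u))).toReal)⁻¹ * Real.exp (-(t^2)/(4*u)) *
                  Real.exp (-c * (dist x y)^2 / u) * u ^ (-κ)) ≤ C' := by
  intro c hc κ hκ
  have hC₀ : 0 ≤ C₀ := hc₀.le.trans hc₀C₀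
  have hν : 0 ≤ ν := hν'.le.trans hνν
  set ε : ℝ := min (1/4) c / 2
  have hε : 0 < ε := by have := lt_min (by norm_num : (0 : ℝ) < 1/4) hc; positivity
  set c' : ℝ := (C₀ * √2 ^ ν)⁻¹ * exp (-(1/4 + c)) * 2 ^ (-κ)
  refine ⟨c', max c' (∫ s in Ioi 0, (C₀ * s ^ (-(ν / 2)) + c₀⁻¹) * exp (-ε / s) * s ^ (-κ)),
    by have : 0 < C₀ := hc₀.trans_le hc₀C₀; positivity, le_max_left _ _, fun x y t ht => ?_⟩
  have hVC : VolumeComparable (fun r => (μ (ball x r)).toReal) ν ν' c₀ C₀ := hdoub x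
  have hVm : Measurable fun r => (μ (ball x r)).toReal :=
    ENNReal.measurable_toReal.comp (Monotone.measurable (f := fun r => μ (ball x r))
      fun _ _ hrR => measure_mono (ball_subset_ball hrR))
  have hV : ∀ r, 0 < r → 0 < (μ (ball x r)).toReal := fun r hr =>
    ENNReal.toReal_pos (hVpos x r hr).ne' (hVfin x r hr).ne
  have hρ : 0 < t + dist x y := by positivity
  set b := (t ^ 2 / 4 + c * dist x y ^ 2) / (t + dist x y) ^ 2
  have hεb : ε ≤ b := (le_div_iff₀ (by positivity)).2 (min_div_two_mul_sq_le hc.le)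
  have hbB : b ≤ 1/4 + c :=
    (div_le_iff₀ (by positivity)).2 (sq_div_four_add_mul_sq_le hc.le ht.le dist_nonneg)
  have key := mul_rpow_mul_integral_eq_integral_div (fun r => (μ (ball x r)).toReal) hρ κ t c
    (dist x y)
  beta_reduce at key
  rw [key]
  exact ⟨hVC.le_integral_div_mul_exp_mul_rpow hVm hV hc₀ hC₀ hν'.le hν hκ hρ
      (hε.trans_le hεb) hbB,
    (hVC.integral_div_mul_exp_mul_rpow_le hV hc₀ hC₀ hν'.le hν hκ hε hρ hεb).trans
      (le_max_right _ _)⟩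

/-- two-sided bound for the subordination-type integral
`∫₀^∞ V(x,√u)⁻¹ e^{-t²/(4u)} e^{-c d(x,y)²/u} u^{-κ} du`. -/
theorem stmt_3
    {M : Type*} [MetricSpace M] [MeasurableSpace M] [BorelSpace M]
    (μ : Measure M)
    (hVpos : ∀ (x : M) (r : ℝ), 0 < r → 0 < μ (ball x r))
    (hVfin : ∀ (x : M) (r : ℝ), 0 < r → μ (ball x r) < ⊤)
    -- volume comparability
    (ν ν' c₀ C₀ : ℝ) (hν' : 0 < ν') (hνν : ν' ≤ ν) (hc₀ : 0 < c₀) (hc₀C₀ : c₀ ≤ C₀)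
    (hdoub : ∀ (x : M) (r R : ℝ), 0 < r → r ≤ R →
        c₀ * (R/r) ^ ν' ≤ (μ (ball x R)).toReal / (μ (ball x r)).toReal ∧
        (μ (ball x R)).toReal / (μ (ball x r)).toReal ≤ C₀ * (R/r) ^ ν)
    (hcomp : ∀ (x y : M) (r : ℝ), 0 < r →
        (μ (ball x r)).toReal ≤ C₀ * (1 + dist x y / r) ^ ν * (μ (ball y r)).toReal) :
    ∀ c : ℝ, 0 < c → ∀ κ : ℝ, 1 < κ →
      ∃ c' C' : ℝ, 0 < c' ∧ c' ≤ C' ∧ ∀ (x y : M) (t : ℝ), 0 < t →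
        c' ≤ (μ (ball x (t + dist x y))).toReal * (t + dist x y) ^ (2*(κ-1)) *
              ∫ u in Set.Ioi (0:ℝ),
                ((μ (ball x (Real.sqrt u))).toReal)⁻¹ * Real.exp (-(t^2)/(4*u)) *
                  Real.exp (-c * (dist x y)^2 / u) * u ^ (-κ) ∧
        (μ (ball x (t + dist x y))).toReal * (t + dist x y) ^ (2*(κ-1)) *
              (∫ u in Set.Ioi (0:ℝ),
                ((μ (ball x (Real.sqrt u))).toReal)⁻¹ * Real.exp (-(t^2)/(4*u)) *
                  Real.exp (-c * (dist x y)^2 / u) * u ^ (-κ)) ≤ C' :=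
  stmt_3_general μ hVpos hVfin ν ν' c₀ C₀ hν' hνν hc₀ hc₀C₀ hdoub
end

section
/- For every c > 0, κ > 1, r > 0 and N > 0 there exist constants C > 0 and t₀ > 0 (depending on c, κ, r, N and the volume comparability constants) such that for all t ≥ t₀ and all x, y ∈ M: V(x, t + d(x,y)) · (t + d(x,y))^{2(κ−1)} · ∫₀^r V(x,√u)^{−1} exp(−t²/(4u)) exp(−c d(x,y)²/u) u^{−κ} du ≤ C t^{−N}. -/
/-!
For `0 < u ≤ r ≤ t²` we have `√u ≤ s := t + d(x,y)`, so the doubling bound gives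
`V(x,s) / V(x,√u) ≤ C₀ (s/√u)^ν`. Since `s² ≤ 2t² + 2d(x,y)²`, the two Gaussian factors combine
into `exp(-a s²/u)` with `a = min (1/8) (c/2)`, and `exp(-a s²/u) ≤ m! (u / (a s²))^m` absorbs every
power of `s` and of `u⁻¹` once `m` is large, leaving `s^(-N) ≤ t^(-N)` uniformly in `u ∈ (0, r]`.
-/

open MeasureTheory Metric Real Filter
open scoped Nat

lemma Real.exp_neg_le_factorial_div_pow {x : ℝ} (hx : 0 < x) (n : ℕ) :
    exp (-x) ≤ n ! / x ^ n := by
  rw [exp_neg, ← inv_div]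
  exact inv_anti₀ (by positivity) (pow_div_factorial_le_exp x hx.le n)

lemma rpow_mul_rpow_mul_exp_neg_le {a r s u α β N : ℝ} {m : ℕ} (ha : 0 < a) (hs : 1 ≤ s)
    (hu : 0 < u) (hur : u ≤ r) (hβm : β ≤ m) (hαm : α + N ≤ 2 * m) :
    s ^ α * u ^ (-β) * exp (-(a * s ^ 2 / u)) ≤ m ! / a ^ m * r ^ ((m : ℝ) - β) * s ^ (-N) := by
  have hs0 : 0 < s := one_pos.trans_le hs
  have hexp : exp (-(a * s ^ 2 / u)) ≤ m ! / a ^ m * u ^ (m : ℝ) * s ^ (-(2 * m : ℝ)) := by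
    refine (exp_neg_le_factorial_div_pow (by positivity) m).trans_eq ?_
    rw [rpow_natCast, rpow_neg hs0.le, rpow_mul hs0.le, rpow_natCast, rpow_two, div_pow, mul_pow]
    field_simp
  calc s ^ α * u ^ (-β) * exp (-(a * s ^ 2 / u))
      ≤ s ^ α * u ^ (-β) * (m ! / a ^ m * u ^ (m : ℝ) * s ^ (-(2 * m : ℝ))) := by gcongr
    _ = m ! / a ^ m * u ^ ((m : ℝ) - β) * s ^ (α - 2 * m) := by
      rw [sub_eq_add_neg, sub_eq_add_neg, rpow_add hu, rpow_add hs0]; ring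
    _ ≤ m ! / a ^ m * r ^ ((m : ℝ) - β) * s ^ (-N) := by
      have hr : 0 ≤ r ^ ((m : ℝ) - β) := rpow_nonneg (hu.le.trans hur) _
      gcongr
      · linarith

lemma exp_neg_sq_div_mul_exp_neg_sq_div_le {a c t d u : ℝ} (ha : 0 ≤ a) (ha₁ : a ≤ 1 / 8)
    (ha₂ : a ≤ c / 2) (hu : 0 ≤ u) :
    exp (-(t ^ 2) / (4 * u)) * exp (-c * d ^ 2 / u) ≤ exp (-(a * (t + d) ^ 2 / u)) := by
  have key : a * (t + d) ^ 2 ≤ t ^ 2 / 4 + c * d ^ 2 := by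
    nlinarith [mul_nonneg ha (sq_nonneg (t - d)), mul_le_mul_of_nonneg_right ha₁ (sq_nonneg t),
      mul_le_mul_of_nonneg_right ha₂ (sq_nonneg d)]
  rw [← exp_add, exp_le_exp]
  calc -(t ^ 2) / (4 * u) + -c * d ^ 2 / u = -((t ^ 2 / 4 + c * d ^ 2) / u) := by ring
    _ ≤ -(a * (t + d) ^ 2 / u) := neg_le_neg (div_le_div_of_nonneg_right key hu)

section DoublingMeasure

variable {M : Type*} [PseudoMetricSpace M] [MeasurableSpace M]

def VolumeRatioLE (μ : Measure M) (C₀ ν : ℝ) : Prop :=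
  ∀ (x : M) (r R : ℝ), 0 < r → r ≤ R →
    (μ (ball x R)).toReal / (μ (ball x r)).toReal ≤ C₀ * (R / r) ^ ν

variable {μ : Measure M} {C₀ ν : ℝ}

lemma toReal_measure_ball_mul_inv_le (hdoub : VolumeRatioLE μ C₀ ν) (x : M) {s u : ℝ} (hu : 0 < u) (hus : √u ≤ s) :
    (μ (ball x s)).toReal * ((μ (ball x √u)).toReal)⁻¹ ≤ C₀ * s ^ ν * u ^ (-(ν / 2)) := by
  rw [← div_eq_mul_inv]
  refine (hdoub x _ _ (sqrt_pos.2 hu) hus).trans_eq ?_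
  rw [div_rpow ((sqrt_nonneg u).trans hus) (sqrt_nonneg u), sqrt_eq_rpow, ← rpow_mul hu.le,
    rpow_neg hu.le]
  ring_nf

lemma norm_integrand_le (hdoub : VolumeRatioLE μ C₀ ν)
    (hC₀ : 0 ≤ C₀) {a c κ r N t : ℝ} {m : ℕ} (ha : 0 < a) (ha₁ : a ≤ 1 / 8) (ha₂ : a ≤ c / 2)
    (hm₁ : ν / 2 + κ ≤ m) (hm₂ : ν + 2 * (κ - 1) + N ≤ 2 * m) (hN : 0 < N)
    (ht : 1 ≤ t) (hrt : √r ≤ t) (x y : M) {u : ℝ} (hu : u ∈ Set.Ioc 0 r) :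
    ‖(μ (ball x (t + dist x y))).toReal * (t + dist x y) ^ (2 * (κ - 1)) *
        (((μ (ball x √u)).toReal)⁻¹ * exp (-(t ^ 2) / (4 * u)) *
          exp (-c * dist x y ^ 2 / u) * u ^ (-κ))‖ ≤
      C₀ * (m ! / a ^ m * r ^ ((m : ℝ) - (ν / 2 + κ))) * t ^ (-N) := by
  obtain ⟨hu, hur⟩ := hu
  set s := t + dist x y
  have ht0 : 0 < t := one_pos.trans_le ht
  have hts : t ≤ s := le_add_of_nonneg_right dist_nonneg
  have hs0 : 0 < s := ht0.trans_le hts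
  have hus : √u ≤ s := (sqrt_le_sqrt hur).trans (hrt.trans hts)
  rw [Real.norm_of_nonneg (by positivity)]
  calc (μ (ball x s)).toReal * s ^ (2 * (κ - 1)) *
        (((μ (ball x √u)).toReal)⁻¹ * exp (-(t ^ 2) / (4 * u)) *
          exp (-c * dist x y ^ 2 / u) * u ^ (-κ))
      = s ^ (2 * (κ - 1)) * ((μ (ball x s)).toReal * ((μ (ball x √u)).toReal)⁻¹) *
          (exp (-(t ^ 2) / (4 * u)) * exp (-c * dist x y ^ 2 / u)) * u ^ (-κ) := by ring
    _ ≤ s ^ (2 * (κ - 1)) * (C₀ * s ^ ν * u ^ (-(ν / 2))) * exp (-(a * s ^ 2 / u)) *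
          u ^ (-κ) := by
      gcongr _ * ?_ * ?_ * _
      · exact toReal_measure_ball_mul_inv_le hdoub x hu hus
      · exact exp_neg_sq_div_mul_exp_neg_sq_div_le ha.le ha₁ ha₂ hu.le
    _ = C₀ * (s ^ (ν + 2 * (κ - 1)) * u ^ (-(ν / 2 + κ)) * exp (-(a * s ^ 2 / u))) := by
      rw [rpow_add hs0, neg_add, rpow_add hu]; ring
    _ ≤ C₀ * (m ! / a ^ m * r ^ ((m : ℝ) - (ν / 2 + κ)) * s ^ (-N)) := by
      gcongr C₀ * ?_
      exact rpow_mul_rpow_mul_exp_neg_le ha (ht.trans hts) hu hur hm₁ hm₂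
    _ ≤ C₀ * (m ! / a ^ m * r ^ ((m : ℝ) - (ν / 2 + κ))) * t ^ (-N) := by
      have hr : 0 ≤ r ^ ((m : ℝ) - (ν / 2 + κ)) := rpow_nonneg (hu.le.trans hur) _
      rw [← mul_assoc]
      exact mul_le_mul_of_nonneg_left (rpow_le_rpow_of_nonpos ht0 hts (neg_nonpos.2 hN.le))
        (by positivity)

end DoublingMeasure

theorem stmt_4_general
    {M : Type*} [MetricSpace M] [MeasurableSpace M]
    (μ : Measure M)
    -- volume comparability
    (ν ν' c₀ C₀ : ℝ) (hc₀ : 0 < c₀) (hc₀C₀ : c₀ ≤ C₀)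
    (hdoub : ∀ (x : M) (r R : ℝ), 0 < r → r ≤ R →
        c₀ * (R/r) ^ ν' ≤ (μ (ball x R)).toReal / (μ (ball x r)).toReal ∧
        (μ (ball x R)).toReal / (μ (ball x r)).toReal ≤ C₀ * (R/r) ^ ν) :
    ∀ c : ℝ, 0 < c → ∀ κ : ℝ, 1 < κ → ∀ r : ℝ, 0 < r → ∀ N : ℝ, 0 < N →
      ∃ C t₀ : ℝ, 0 < C ∧ 0 < t₀ ∧ ∀ t : ℝ, t₀ ≤ t → ∀ x y : M,
        (μ (ball x (t + dist x y))).toReal * (t + dist x y) ^ (2*(κ-1)) *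
            (∫ u in Set.Ioc (0:ℝ) r,
              ((μ (ball x (Real.sqrt u))).toReal)⁻¹ * Real.exp (-(t^2)/(4*u)) *
                Real.exp (-c * (dist x y)^2 / u) * u ^ (-κ))
          ≤ C * t ^ (-N) := by
  intro c hc κ _ r hr N hN
  have hC₀ : 0 < C₀ := hc₀.trans_le hc₀C₀
  set a := min (1 / 8) (c / 2)
  obtain ⟨m, hm⟩ : ∃ m : ℕ, ν / 2 + κ + N / 2 ≤ m := ⟨_, Nat.le_ceil _⟩
  set K := m ! / a ^ m * r ^ ((m : ℝ) - (ν / 2 + κ))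
  refine ⟨C₀ * K * r, max 1 √r, by positivity, by positivity, fun t ht x y => ?_⟩
  rw [← integral_const_mul]
  refine (le_norm_self _).trans ?_
  refine (norm_setIntegral_le_of_norm_le_const (C := C₀ * K * t ^ (-N))
    measure_Ioc_lt_top fun u hu => ?_).trans_eq ?_
  · exact norm_integrand_le (fun x r R h h' => (hdoub x r R h h').2) hC₀.le
      (by positivity) (min_le_left _ _) (min_le_right _ _) (by linarith) (by linarith) hN
      ((le_max_left _ _).trans ht) ((le_max_right _ _).trans ht) x y hu
  · rw [volume_real_Ioc_of_le hr.le, sub_zero]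
    ring

/-- the truncated subordination-type integral
`∫₀^r V(x,√u)⁻¹ e^{-t²/(4u)} e^{-c d(x,y)²/u} u^{-κ} du` decays faster than any power of `t`,
uniformly in `x, y`, after normalization. -/
theorem stmt_4
    {M : Type*} [MetricSpace M] [MeasurableSpace M] [BorelSpace M]
    (μ : Measure M)
    (hVpos : ∀ (x : M) (r : ℝ), 0 < r → 0 < μ (ball x r))
    (hVfin : ∀ (x : M) (r : ℝ), 0 < r → μ (ball x r) < ⊤)
    -- volume comparability
    (ν ν' c₀ C₀ : ℝ) (hν' : 0 < ν') (hνν : ν' ≤ ν) (hc₀ : 0 < c₀) (hc₀C₀ : c₀ ≤ C₀)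
    (hdoub : ∀ (x : M) (r R : ℝ), 0 < r → r ≤ R →
        c₀ * (R/r) ^ ν' ≤ (μ (ball x R)).toReal / (μ (ball x r)).toReal ∧
        (μ (ball x R)).toReal / (μ (ball x r)).toReal ≤ C₀ * (R/r) ^ ν)
    (hcomp : ∀ (x y : M) (r : ℝ), 0 < r →
        (μ (ball x r)).toReal ≤ C₀ * (1 + dist x y / r) ^ ν * (μ (ball y r)).toReal) :
    ∀ c : ℝ, 0 < c → ∀ κ : ℝ, 1 < κ → ∀ r : ℝ, 0 < r → ∀ N : ℝ, 0 < N →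
      ∃ C t₀ : ℝ, 0 < C ∧ 0 < t₀ ∧ ∀ t : ℝ, t₀ ≤ t → ∀ x y : M,
        (μ (ball x (t + dist x y))).toReal * (t + dist x y) ^ (2*(κ-1)) *
            (∫ u in Set.Ioc (0:ℝ) r,
              ((μ (ball x (Real.sqrt u))).toReal)⁻¹ * Real.exp (-(t^2)/(4*u)) *
                Real.exp (-c * (dist x y)^2 / u) * u ^ (-κ))
          ≤ C * t ^ (-N) :=
  stmt_4_general μ ν ν' c₀ C₀ hc₀ hc₀C₀ hdoub
end

section
/- Let σ ∈ (0,1). There exist constants 0 < c' ≤ C' (depending on σ, the Li–Yau constants and the volume comparability constants) such that for all x, y ∈ M and t > 0: c' · t^{2σ} / ( V(x, t + d(x,y)) · (t + d(x,y))^{2σ} ) ≤ Q_t^σ(x,y) ≤ C' · t^{2σ} / ( V(x, t + d(x,y)) · (t + d(x,y))^{2σ} ). -/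
open MeasureTheory Metric Real Filter

/-
The subordination integral is estimated with the Li–Yau bounds, writing `D = t + d(x,y)`.
Upper bound: volume comparison gives `V(x,D) ≲ (1 + (D/√u)^ν) V(y,√u)`, and since
`(t + d)² ≤ 2(t² + d²)` the two Gaussian factors combine into `exp(-a D²/u)`; the integrals
`∫₀^∞ e^{-b/u} u^{-1-s} du = Γ(s) b^{-s}` (substitute `u = 1/x`) then give `D^{-2σ}/V(x,D)`
for both the `1` and the `(D/√u)^ν` term.
Lower bound: on `u ∈ (D², 4D²]` the Gaussian factors are bounded below,
`u^{-1-σ} ≳ D^{-2-2σ}` and `V(y,√u) ≲ V(x,D)`, so the integral is at least a constant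
times `D² · D^{-2-2σ} / V(x,D)`.
-/

/-- The kernel subordinated to the heat kernel `h`, arising from the
Caffarelli–Silvestre extension problem:
`Q_t^σ(x,y) = (t^{2σ}/(2^{2σ}Γ(σ))) ∫₀^∞ h_u(x,y) e^{-t²/(4u)} u^{-1-σ} du`. -/
noncomputable def Qker {M : Type*} (h : ℝ → M → M → ℝ) (σ t : ℝ) (x y : M) : ℝ :=
  (t ^ (2*σ) / ((2:ℝ) ^ (2*σ) * Real.Gamma σ)) *
    ∫ u in Set.Ioi (0:ℝ), h u x y * Real.exp (-(t^2)/(4*u)) * u ^ (-1-σ)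

-- The integrand after the substitution `u = x ^ (-1)`, in the shape of `integral_comp_rpow_Ioi`.
lemma exp_neg_div_mul_rpow_comp_rpow_neg_one {s b x : ℝ} (hx : 0 < x) :
    (|(-1 : ℝ)| * x ^ ((-1 : ℝ) - 1)) •
        (exp (-(b / x ^ (-1 : ℝ))) * (x ^ (-1 : ℝ)) ^ (-1 - s)) =
      x ^ (s - 1) * exp (-(b * x)) := by
  rw [rpow_neg_one, abs_neg, abs_one, one_mul, div_inv_eq_mul, inv_rpow hx.le,
    ← rpow_neg hx.le, smul_eq_mul, mul_comm (exp _), ← mul_assoc, ← rpow_add hx]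
  ring_nf

lemma integrableOn_exp_neg_div_mul_rpow {s b : ℝ} (hs : 0 < s) (hb : 0 < b) :
    IntegrableOn (fun u : ℝ => exp (-(b / u)) * u ^ (-1 - s)) (Set.Ioi 0) := by
  refine (integrableOn_Ioi_comp_rpow_iff _ (p := -1) (by norm_num)).mp ?_
  have := integrableOn_rpow_mul_exp_neg_mul_rpow (p := 1) (by linarith : -1 < s - 1) one_pos hb
  simp only [rpow_one, neg_mul] at this
  exact this.congr_fun (fun x hx => (exp_neg_div_mul_rpow_comp_rpow_neg_one hx).symm)
    measurableSet_Ioi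

lemma integral_exp_neg_div_mul_rpow {s b : ℝ} (hs : 0 < s) (hb : 0 < b) :
    ∫ u in Set.Ioi (0 : ℝ), exp (-(b / u)) * u ^ (-1 - s) = Gamma s * b ^ (-s) := by
  rw [← integral_comp_rpow_Ioi _ (p := -1) (by norm_num),
    setIntegral_congr_fun measurableSet_Ioi (fun x hx => exp_neg_div_mul_rpow_comp_rpow_neg_one hx),
    integral_rpow_mul_exp_neg_mul_Ioi hs hb, rpow_neg hb.le, one_div, inv_rpow hb.le]
  ring

lemma integrableOn_and_integral_le_of_le_exp_neg_div {φ : ℝ → ℝ} {A B b σ τ : ℝ}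
    (hσ : 0 < σ) (hτ : 0 < τ) (hb : 0 < b)
    (hφ : AEStronglyMeasurable φ (volume.restrict (Set.Ioi 0)))
    (hφ0 : ∀ u ∈ Set.Ioi (0 : ℝ), 0 ≤ φ u)
    (hφle : ∀ u ∈ Set.Ioi (0 : ℝ),
      φ u ≤ A * (exp (-(b / u)) * u ^ (-1 - σ)) + B * (exp (-(b / u)) * u ^ (-1 - τ))) :
    IntegrableOn φ (Set.Ioi 0) ∧
      ∫ u in Set.Ioi (0 : ℝ), φ u ≤
        A * (Gamma σ * b ^ (-σ)) + B * (Gamma τ * b ^ (-τ)) := by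
  have hgσ := (integrableOn_exp_neg_div_mul_rpow hσ hb).const_mul A
  have hgτ := (integrableOn_exp_neg_div_mul_rpow hτ hb).const_mul B
  have hg : IntegrableOn (fun u : ℝ =>
      A * (exp (-(b / u)) * u ^ (-1 - σ)) + B * (exp (-(b / u)) * u ^ (-1 - τ))) (Set.Ioi 0) :=
    hgσ.add hgτ
  have hφint : IntegrableOn φ (Set.Ioi 0) := by
    refine hg.mono' hφ ?_
    filter_upwards [ae_restrict_mem measurableSet_Ioi] with u hu
    rw [norm_of_nonneg (hφ0 u hu)]
    exact hφle u hu
  refine ⟨hφint, (setIntegral_mono_on hφint hg measurableSet_Ioi hφle).trans_eq ?_⟩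
  rw [integral_add hgσ hgτ,
    integral_const_mul, integral_const_mul, integral_exp_neg_div_mul_rpow hσ hb,
    integral_exp_neg_div_mul_rpow hτ hb]

lemma mul_sub_le_integral_Ioi {φ : ℝ → ℝ} {a b c : ℝ} (ha : 0 ≤ a) (hab : a ≤ b)
    (hφ : IntegrableOn φ (Set.Ioi 0)) (hφ0 : ∀ u ∈ Set.Ioi (0 : ℝ), 0 ≤ φ u)
    (hc : ∀ u ∈ Set.Ioc a b, c ≤ φ u) :
    c * (b - a) ≤ ∫ u in Set.Ioi (0 : ℝ), φ u := by
  have hsub : Set.Ioc a b ⊆ Set.Ioi 0 := fun u hu => ha.trans_lt hu.1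
  calc c * (b - a) = c * volume.real (Set.Ioc a b) := by
        rw [Real.volume_real_Ioc_of_le hab]
    _ ≤ ∫ u in Set.Ioc a b, φ u :=
        setIntegral_ge_of_const_le_real measurableSet_Ioc measure_Ioc_lt_top.ne hc
          (hφ.mono_set hsub)
    _ ≤ ∫ u in Set.Ioi (0 : ℝ), φ u :=
        setIntegral_mono_set hφ (ae_restrict_of_forall_mem measurableSet_Ioi hφ0)
          hsub.eventuallyLE

lemma min_div_two_mul_add_sq_le {c t d : ℝ} (hc : 0 ≤ c) :
    min c 4⁻¹ / 2 * (t + d) ^ 2 ≤ c * d ^ 2 + t ^ 2 / 4 := by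
  have h1 : min c 4⁻¹ ≤ c := min_le_left _ _
  have h2 : min c 4⁻¹ ≤ 4⁻¹ := min_le_right _ _
  have h3 : 0 ≤ min c 4⁻¹ := le_min hc (by norm_num)
  nlinarith [mul_nonneg h3 (sq_nonneg (t - d)), mul_nonneg (sub_nonneg.mpr h1) (sq_nonneg d),
    mul_nonneg (sub_nonneg.mpr h2) (sq_nonneg t)]

lemma sq_rpow_eq_rpow_two_mul {D : ℝ} (hD : 0 ≤ D) (s : ℝ) : (D ^ 2) ^ s = D ^ (2 * s) := by
  rw [← rpow_natCast_mul hD]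
  norm_num

section MetricMeasureSpace

variable {M : Type*} [MetricSpace M] [MeasurableSpace M] {μ : Measure M} {ν C₀ : ℝ}

structure VolumeComparable_s5 (μ : Measure M) (C₀ ν : ℝ) : Prop where
  pos : ∀ (x : M) (r : ℝ), 0 < r → 0 < (μ (ball x r)).toReal
  doubling : ∀ (x : M) (r R : ℝ), 0 < r → r ≤ R →
    (μ (ball x R)).toReal / (μ (ball x r)).toReal ≤ C₀ * (R / r) ^ ν
  comparison : ∀ (x y : M) (r : ℝ), 0 < r →
    (μ (ball x r)).toReal ≤ C₀ * (1 + dist x y / r) ^ ν * (μ (ball y r)).toReal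

lemma VolumeComparable_s5.one_le (hμ : VolumeComparable_s5 μ C₀ ν) (x : M) : 1 ≤ C₀ := by
  simpa [div_self (hμ.pos x 1 one_pos).ne'] using hμ.doubling x 1 1 one_pos le_rfl

lemma measure_ball_le_one_add_div_rpow
    (hμ : VolumeComparable_s5 μ C₀ ν) (x : M) {r R : ℝ} (hr : 0 < r) (hR : 0 < R) :
    (μ (ball x R)).toReal ≤ C₀ * (1 + (R / r) ^ ν) * (μ (ball x r)).toReal := by
  have hC₀ := hμ.one_le x
  have hX : 0 ≤ (R / r) ^ ν := by positivity
  have hVr := hμ.pos x r hr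
  rcases le_total r R with hrR | hRr
  · calc (μ (ball x R)).toReal ≤ C₀ * (R / r) ^ ν * (μ (ball x r)).toReal :=
          (div_le_iff₀ hVr).mp (hμ.doubling x r R hr hrR)
      _ ≤ C₀ * (1 + (R / r) ^ ν) * (μ (ball x r)).toReal := by gcongr; linarith
  · have hfin : μ (ball x r) ≠ ⊤ := (ENNReal.toReal_pos_iff.mp hVr).2.ne
    calc (μ (ball x R)).toReal ≤ 1 * (μ (ball x r)).toReal := by
          rw [one_mul]; exact ENNReal.toReal_mono hfin (measure_mono (ball_subset_ball hRr))
      _ ≤ C₀ * (1 + (R / r) ^ ν) * (μ (ball x r)).toReal := by gcongr; nlinarith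

lemma measure_ball_le_of_dist_le
    (hμ : VolumeComparable_s5 μ C₀ ν)
    (hν : 0 ≤ ν) {x y : M} {r R : ℝ} (hr : 0 < r) (hR : 0 < R) (hxy : dist x y ≤ R) :
    (μ (ball x R)).toReal ≤ C₀ ^ 2 * 2 ^ ν * (1 + (R / r) ^ ν) * (μ (ball y r)).toReal := by
  have hC₀ := hμ.one_le x
  have hdR : (1 + dist x y / R) ^ ν ≤ 2 ^ ν := by
    gcongr
    linarith [(div_le_one hR).mpr hxy]
  calc (μ (ball x R)).toReal ≤ C₀ * (1 + dist x y / R) ^ ν * (μ (ball y R)).toReal :=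
        hμ.comparison x y R hR
    _ ≤ C₀ * 2 ^ ν * (C₀ * (1 + (R / r) ^ ν) * (μ (ball y r)).toReal) := by
        gcongr
        exact measure_ball_le_one_add_div_rpow hμ y hr hR
    _ = C₀ ^ 2 * 2 ^ ν * (1 + (R / r) ^ ν) * (μ (ball y r)).toReal := by ring

variable {h : ℝ → M → M → ℝ} {c₁ C₁ c₂ C₂ σ : ℝ}

lemma heat_integrand_le
    (hμ : VolumeComparable_s5 μ C₀ ν) (hν : 0 ≤ ν) (hc₂ : 0 ≤ c₂) (hC₂ : 0 ≤ C₂)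
    (hup : ∀ u : ℝ, 0 < u → ∀ x y : M,
      h u x y ≤ C₂ / (μ (ball y (√u))).toReal * exp (-c₂ * (dist x y) ^ 2 / u))
    (x y : M) {t u : ℝ} (ht : 0 < t) (hu : 0 < u) :
    h u x y * exp (-(t ^ 2) / (4 * u)) * u ^ (-1 - σ) ≤
      C₂ * C₀ ^ 2 * 2 ^ ν / (μ (ball x (t + dist x y))).toReal *
          (exp (-(min c₂ 4⁻¹ / 2 * (t + dist x y) ^ 2 / u)) * u ^ (-1 - σ)) +
        C₂ * C₀ ^ 2 * 2 ^ ν * (t + dist x y) ^ ν / (μ (ball x (t + dist x y))).toReal *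
          (exp (-(min c₂ 4⁻¹ / 2 * (t + dist x y) ^ 2 / u)) * u ^ (-1 - (σ + ν / 2))) := by
  set D := t + dist x y
  have hD : 0 < D := by positivity
  have hsu : 0 < √u := sqrt_pos.mpr hu
  have hW := hμ.pos y (√u) hsu
  have hVD := hμ.pos x D hD
  have hvol := measure_ball_le_of_dist_le hμ hν hsu hD
    (le_add_of_nonneg_left ht.le : dist x y ≤ D)
  have hpow : (D / √u) ^ ν * u ^ (-1 - σ) = D ^ ν * u ^ (-1 - (σ + ν / 2)) := by
    rw [div_rpow hD.le hsu.le, sqrt_eq_rpow, ← rpow_mul hu.le, div_mul_eq_mul_div,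
      mul_div_assoc, ← rpow_sub hu]
    ring_nf
  have hexp : exp (-c₂ * dist x y ^ 2 / u) * exp (-(t ^ 2) / (4 * u)) ≤
      exp (-(min c₂ 4⁻¹ / 2 * D ^ 2 / u)) := by
    rw [← exp_add, exp_le_exp, show -c₂ * dist x y ^ 2 / u + -(t ^ 2) / (4 * u)
      = -((c₂ * dist x y ^ 2 + t ^ 2 / 4) / u) by ring, neg_le_neg_iff]
    gcongr
    exact min_div_two_mul_add_sq_le hc₂
  have hcoef : C₂ / (μ (ball y (√u))).toReal ≤
      C₂ * (C₀ ^ 2 * 2 ^ ν * (1 + (D / √u) ^ ν)) / (μ (ball x D)).toReal := by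
    rw [div_le_div_iff₀ hW hVD, mul_assoc]
    gcongr
  calc h u x y * exp (-(t ^ 2) / (4 * u)) * u ^ (-1 - σ)
      ≤ C₂ / (μ (ball y (√u))).toReal *
          (exp (-c₂ * dist x y ^ 2 / u) * exp (-(t ^ 2) / (4 * u))) * u ^ (-1 - σ) := by
        rw [← mul_assoc]
        gcongr
        exact hup u hu x y
    _ ≤ C₂ * (C₀ ^ 2 * 2 ^ ν * (1 + (D / √u) ^ ν)) / (μ (ball x D)).toReal *
          exp (-(min c₂ 4⁻¹ / 2 * D ^ 2 / u)) * u ^ (-1 - σ) := by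
        gcongr
    _ = C₂ * C₀ ^ 2 * 2 ^ ν / (μ (ball x D)).toReal *
            (exp (-(min c₂ 4⁻¹ / 2 * D ^ 2 / u)) * u ^ (-1 - σ)) +
          C₂ * C₀ ^ 2 * 2 ^ ν / (μ (ball x D)).toReal *
            exp (-(min c₂ 4⁻¹ / 2 * D ^ 2 / u)) * ((D / √u) ^ ν * u ^ (-1 - σ)) := by ring
    _ = _ := by rw [hpow]; ring

lemma le_heat_integrand
    (hμ : VolumeComparable_s5 μ C₀ ν) (hν : 0 ≤ ν) (hσ : -1 ≤ σ) (hc₁ : 0 ≤ c₁) (hC₁ : 0 ≤ C₁)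
    (hlow : ∀ u : ℝ, 0 < u → ∀ x y : M,
      c₁ / (μ (ball y (√u))).toReal * exp (-C₁ * (dist x y) ^ 2 / u) ≤ h u x y)
    (x y : M) {t u : ℝ} (ht : 0 < t)
    (hu : u ∈ Set.Ioc ((t + dist x y) ^ 2) (4 * (t + dist x y) ^ 2)) :
    c₁ / (C₀ ^ 2 * 2 ^ ν * (1 + 2 ^ ν) * (μ (ball x (t + dist x y))).toReal) *
        exp (-(C₁ + 4⁻¹)) * (4 * (t + dist x y) ^ 2) ^ (-1 - σ) ≤
      h u x y * exp (-(t ^ 2) / (4 * u)) * u ^ (-1 - σ) := by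
  set D := t + dist x y
  have hD : 0 < D := by positivity
  have hu0 : 0 < u := (pow_pos hD 2).trans hu.1
  have hsu : 0 < √u := sqrt_pos.mpr hu0
  have hDu : D ≤ √u := (le_sqrt hD.le hu0.le).mpr hu.1.le
  have hu2D : √u ≤ 2 * D := (sqrt_le_left (by positivity)).mpr (by linarith [hu.2])
  have hvol := measure_ball_le_of_dist_le hμ hν hD hsu
    ((dist_comm y x).trans_le ((le_add_of_nonneg_left ht.le).trans hDu))
  have hratio : (√u / D) ^ ν ≤ 2 ^ ν := by
    gcongr
    rw [div_le_iff₀ hD]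
    linarith
  have hW : (μ (ball y (√u))).toReal ≤
      C₀ ^ 2 * 2 ^ ν * (1 + 2 ^ ν) * (μ (ball x D)).toReal := by
    refine hvol.trans ?_
    gcongr
  have hexp :
      exp (-(C₁ + 4⁻¹)) ≤ exp (-C₁ * dist x y ^ 2 / u) * exp (-(t ^ 2) / (4 * u)) := by
    have hd : dist x y ^ 2 ≤ u := le_trans (by gcongr; linarith) hu.1.le
    have ht2 : t ^ 2 ≤ u := le_trans (by gcongr; linarith [dist_nonneg (x := x) (y := y)]) hu.1.le
    rw [← exp_add, exp_le_exp]
    have h1 : C₁ * dist x y ^ 2 / u ≤ C₁ := by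
      rw [div_le_iff₀ hu0]; exact mul_le_mul_of_nonneg_left hd hC₁
    have h2 : t ^ 2 / (4 * u) ≤ 4⁻¹ := by
      rw [div_le_iff₀ (by positivity)]; linarith
    rw [neg_mul, neg_div, neg_div, ← neg_add, neg_le_neg_iff]
    exact add_le_add h1 h2
  calc c₁ / (C₀ ^ 2 * 2 ^ ν * (1 + 2 ^ ν) * (μ (ball x D)).toReal) *
        exp (-(C₁ + 4⁻¹)) * (4 * D ^ 2) ^ (-1 - σ)
      ≤ c₁ / (μ (ball y (√u))).toReal *
          (exp (-C₁ * dist x y ^ 2 / u) * exp (-(t ^ 2) / (4 * u))) * u ^ (-1 - σ) := by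
        have hW0 := hμ.pos y _ hsu
        gcongr ?_ * ?_ * ?_
        · exact div_le_div_of_nonneg_left hc₁ hW0 hW
        · exact rpow_le_rpow_of_nonpos hu0 hu.2 (by linarith)
    _ ≤ h u x y * exp (-(t ^ 2) / (4 * u)) * u ^ (-1 - σ) := by
        rw [← mul_assoc]
        gcongr
        exact hlow u hu0 x y

lemma integrableOn_heat_integrand_and_integral_le
    (hμ : VolumeComparable_s5 μ C₀ ν) (hν : 0 ≤ ν) (hσ : 0 < σ) (hc₂ : 0 < c₂) (hC₂ : 0 ≤ C₂)
    (hup : ∀ u : ℝ, 0 < u → ∀ x y : M,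
      h u x y ≤ C₂ / (μ (ball y (√u))).toReal * exp (-c₂ * (dist x y) ^ 2 / u))
    {x y : M} (hmeas : Measurable fun u => h u x y) (hh0 : ∀ u : ℝ, 0 < u → 0 ≤ h u x y)
    {t : ℝ} (ht : 0 < t) :
    IntegrableOn (fun u => h u x y * exp (-(t ^ 2) / (4 * u)) * u ^ (-1 - σ)) (Set.Ioi 0) ∧
      ∫ u in Set.Ioi (0 : ℝ), h u x y * exp (-(t ^ 2) / (4 * u)) * u ^ (-1 - σ) ≤
        C₂ * C₀ ^ 2 * 2 ^ ν * (Gamma σ * (min c₂ 4⁻¹ / 2) ^ (-σ) +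
          Gamma (σ + ν / 2) * (min c₂ 4⁻¹ / 2) ^ (-(σ + ν / 2))) /
          ((μ (ball x (t + dist x y))).toReal * (t + dist x y) ^ (2 * σ)) := by
  have hD : 0 < t + dist x y := by positivity
  have ha : 0 < min c₂ 4⁻¹ / 2 := by positivity
  have hmeas' : Measurable fun u => h u x y * exp (-(t ^ 2) / (4 * u)) * u ^ (-1 - σ) := by
    fun_prop
  obtain ⟨hint, hle⟩ := integrableOn_and_integral_le_of_le_exp_neg_div hσ
    (by positivity : 0 < σ + ν / 2) (by positivity : 0 < min c₂ 4⁻¹ / 2 * (t + dist x y) ^ 2)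
    hmeas'.aestronglyMeasurable
    (fun u (hu : 0 < u) => by have := hh0 u hu; positivity)
    (fun u hu => heat_integrand_le hμ hν hc₂.le hC₂ hup x y ht hu)
  set D := t + dist x y
  set a := min c₂ 4⁻¹ / 2
  have hVD := hμ.pos x D hD
  refine ⟨hint, hle.trans_eq ?_⟩
  have hpow : ∀ s : ℝ, (a * D ^ 2) ^ (-s) = a ^ (-s) / D ^ (2 * s) := fun s => by
    rw [mul_rpow ha.le (by positivity), sq_rpow_eq_rpow_two_mul hD.le, mul_neg, rpow_neg hD.le,
      div_eq_mul_inv]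
  have hsplit : D ^ (2 * (σ + ν / 2)) = D ^ (2 * σ) * D ^ ν := by
    rw [← rpow_add hD]; ring_nf
  rw [hpow, hpow, hsplit]
  field_simp

lemma le_integral_heat_integrand
    (hμ : VolumeComparable_s5 μ C₀ ν) (hν : 0 ≤ ν) (hσ : -1 ≤ σ) (hc₁ : 0 ≤ c₁) (hC₁ : 0 ≤ C₁)
    (hlow : ∀ u : ℝ, 0 < u → ∀ x y : M,
      c₁ / (μ (ball y (√u))).toReal * exp (-C₁ * (dist x y) ^ 2 / u) ≤ h u x y)
    {x y : M} {t : ℝ} (ht : 0 < t)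
    (hint : IntegrableOn (fun u => h u x y * exp (-(t ^ 2) / (4 * u)) * u ^ (-1 - σ))
      (Set.Ioi 0)) :
    c₁ * exp (-(C₁ + 4⁻¹)) * 3 * 4 ^ (-1 - σ) / (C₀ ^ 2 * 2 ^ ν * (1 + 2 ^ ν)) /
        ((μ (ball x (t + dist x y))).toReal * (t + dist x y) ^ (2 * σ)) ≤
      ∫ u in Set.Ioi (0 : ℝ), h u x y * exp (-(t ^ 2) / (4 * u)) * u ^ (-1 - σ) := by
  have hD : 0 < t + dist x y := by positivity
  have hbound := mul_sub_le_integral_Ioi (by positivity) (by nlinarith) hint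
    (fun u (hu : 0 < u) => by
      have := (mul_nonneg (div_nonneg hc₁ (hμ.pos y _ (sqrt_pos.mpr hu)).le)
        (exp_pos _).le).trans (hlow u hu x y)
      positivity)
    (fun u hu => le_heat_integrand hμ hν hσ hc₁ hC₁ hlow x y ht hu)
  refine le_of_eq_of_le ?_ hbound
  set D := t + dist x y
  have hVD := hμ.pos x D hD
  have hK : 0 < C₀ ^ 2 * 2 ^ ν * (1 + 2 ^ ν) := by
    have := hμ.one_le x
    positivity
  rw [mul_rpow (by norm_num) (by positivity), sq_rpow_eq_rpow_two_mul hD.le,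
    show 2 * (-1 - σ) = -(2 * σ + 2) by ring, rpow_neg hD.le, rpow_add hD, rpow_two]
  field_simp
  ring

theorem exists_Qker_le
    (hμ : VolumeComparable_s5 μ C₀ ν) (hν : 0 ≤ ν) (hσ : 0 < σ) (hc₂ : 0 < c₂) (hC₂ : 0 ≤ C₂)
    (hup : ∀ u : ℝ, 0 < u → ∀ x y : M,
      h u x y ≤ C₂ / (μ (ball y (√u))).toReal * exp (-c₂ * (dist x y) ^ 2 / u))
    (hmeas : ∀ x y : M, Measurable fun u => h u x y)
    (hh0 : ∀ u : ℝ, 0 < u → ∀ x y : M, 0 ≤ h u x y) :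
    ∃ C : ℝ, ∀ (x y : M) (t : ℝ), 0 < t →
      Qker h σ t x y ≤
        C * (t ^ (2 * σ) / ((μ (ball x (t + dist x y))).toReal * (t + dist x y) ^ (2 * σ))) := by
  refine ⟨C₂ * C₀ ^ 2 * 2 ^ ν * (Gamma σ * (min c₂ 4⁻¹ / 2) ^ (-σ) +
      Gamma (σ + ν / 2) * (min c₂ 4⁻¹ / 2) ^ (-(σ + ν / 2))) / (2 ^ (2 * σ) * Gamma σ),
    fun x y t ht => ?_⟩
  have := Gamma_pos_of_pos hσ
  calc Qker h σ t x y ≤ t ^ (2 * σ) / (2 ^ (2 * σ) * Gamma σ) *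
        (C₂ * C₀ ^ 2 * 2 ^ ν * (Gamma σ * (min c₂ 4⁻¹ / 2) ^ (-σ) +
          Gamma (σ + ν / 2) * (min c₂ 4⁻¹ / 2) ^ (-(σ + ν / 2))) /
          ((μ (ball x (t + dist x y))).toReal * (t + dist x y) ^ (2 * σ))) := by
        rw [Qker]
        gcongr
        exact (integrableOn_heat_integrand_and_integral_le hμ hν hσ hc₂ hC₂ hup
          (hmeas x y) (fun u hu => hh0 u hu x y) ht).2
    _ = _ := by ring

theorem exists_pos_le_Qker
    (hμ : VolumeComparable_s5 μ C₀ ν) (hν : 0 ≤ ν) (hσ : 0 < σ) (hc₁ : 0 < c₁) (hC₁ : 0 ≤ C₁)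
    (hlow : ∀ u : ℝ, 0 < u → ∀ x y : M,
      c₁ / (μ (ball y (√u))).toReal * exp (-C₁ * (dist x y) ^ 2 / u) ≤ h u x y)
    (hint : ∀ (x y : M) (t : ℝ), 0 < t →
      IntegrableOn (fun u => h u x y * exp (-(t ^ 2) / (4 * u)) * u ^ (-1 - σ)) (Set.Ioi 0)) :
    ∃ c : ℝ, 0 < c ∧ ∀ (x y : M) (t : ℝ), 0 < t →
      c * (t ^ (2 * σ) / ((μ (ball x (t + dist x y))).toReal * (t + dist x y) ^ (2 * σ))) ≤
        Qker h σ t x y := by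
  rcases isEmpty_or_nonempty M with hM | ⟨⟨x₀⟩⟩
  · exact ⟨1, one_pos, fun x => isEmptyElim x⟩
  have := hμ.one_le x₀
  have := Gamma_pos_of_pos hσ
  refine ⟨c₁ * exp (-(C₁ + 4⁻¹)) * 3 * 4 ^ (-1 - σ) / (C₀ ^ 2 * 2 ^ ν * (1 + 2 ^ ν)) /
      (2 ^ (2 * σ) * Gamma σ), by positivity, fun x y t ht => ?_⟩
  calc _ = t ^ (2 * σ) / (2 ^ (2 * σ) * Gamma σ) *
        (c₁ * exp (-(C₁ + 4⁻¹)) * 3 * 4 ^ (-1 - σ) / (C₀ ^ 2 * 2 ^ ν * (1 + 2 ^ ν)) /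
          ((μ (ball x (t + dist x y))).toReal * (t + dist x y) ^ (2 * σ))) := by ring
    _ ≤ Qker h σ t x y := by
        rw [Qker]
        gcongr
        exact le_integral_heat_integrand hμ hν (by linarith) hc₁.le hC₁ hlow ht
          (hint x y t ht)

end MetricMeasureSpace

theorem stmt_5_general
    {M : Type*} [MetricSpace M] [MeasurableSpace M]
    (μ : Measure M)
    (hVpos : ∀ (x : M) (r : ℝ), 0 < r → 0 < μ (ball x r))
    (hVfin : ∀ (x : M) (r : ℝ), 0 < r → μ (ball x r) < ⊤)
    -- volume comparability
    (ν ν' c₀ C₀ : ℝ) (hν' : 0 < ν') (hνν : ν' ≤ ν)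
    (hdoub : ∀ (x : M) (r R : ℝ), 0 < r → r ≤ R →
        c₀ * (R/r) ^ ν' ≤ (μ (ball x R)).toReal / (μ (ball x r)).toReal ∧
        (μ (ball x R)).toReal / (μ (ball x r)).toReal ≤ C₀ * (R/r) ^ ν)
    (hcomp : ∀ (x y : M) (r : ℝ), 0 < r →
        (μ (ball x r)).toReal ≤ C₀ * (1 + dist x y / r) ^ ν * (μ (ball y r)).toReal)
    -- heat kernel with Li–Yau two-sided Gaussian estimate
    (h : ℝ → M → M → ℝ)
    (hhmeas : Measurable (fun p : ℝ × M × M => h p.1 p.2.1 p.2.2))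
    (c₁ C₁ c₂ C₂ : ℝ) (hc₁ : 0 < c₁) (hC₁ : 0 < C₁) (hc₂ : 0 < c₂) (hC₂ : 0 < C₂)
    (hLY : ∀ u : ℝ, 0 < u → ∀ x y : M,
        c₁ / (μ (ball y (Real.sqrt u))).toReal * Real.exp (-C₁ * (dist x y)^2 / u) ≤ h u x y ∧
        h u x y ≤ C₂ / (μ (ball y (Real.sqrt u))).toReal * Real.exp (-c₂ * (dist x y)^2 / u))
    (σ : ℝ) (hσ0 : 0 < σ) :
    ∃ c' C' : ℝ, 0 < c' ∧ c' ≤ C' ∧ ∀ (x y : M) (t : ℝ), 0 < t →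
      c' * (t ^ (2*σ) /
          ((μ (ball x (t + dist x y))).toReal * (t + dist x y) ^ (2*σ)))
        ≤ Qker h σ t x y ∧
      Qker h σ t x y ≤
        C' * (t ^ (2*σ) /
          ((μ (ball x (t + dist x y))).toReal * (t + dist x y) ^ (2*σ))) := by
  have hν : 0 ≤ ν := hν'.le.trans hνν
  have hμ : VolumeComparable_s5 μ C₀ ν :=
    ⟨fun x r hr => ENNReal.toReal_pos (hVpos x r hr).ne' (hVfin x r hr).ne,
      fun x r R hr hrR => (hdoub x r R hr hrR).2, hcomp⟩
  have hmeas : ∀ x y : M, Measurable fun u => h u x y := fun x y =>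
    hhmeas.comp (measurable_id.prodMk (measurable_const (a := (x, y))))
  have hh0 : ∀ u : ℝ, 0 < u → ∀ x y : M, 0 ≤ h u x y := fun u hu x y =>
    (mul_nonneg (div_nonneg hc₁.le ENNReal.toReal_nonneg) (exp_pos _).le).trans (hLY u hu x y).1
  have hup := fun u hu x y => (hLY u hu x y).2
  obtain ⟨C, hC⟩ := exists_Qker_le hμ hν hσ0 hc₂ hC₂.le hup hmeas hh0
  obtain ⟨c, hc, hc'⟩ := exists_pos_le_Qker hμ hν hσ0 hc₁ hC₁.le
    (fun u hu x y => (hLY u hu x y).1) fun x y t ht =>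
      (integrableOn_heat_integrand_and_integral_le hμ hν hσ0 hc₂ hC₂.le hup
        (hmeas x y) (fun u hu => hh0 u hu x y) ht).1
  refine ⟨c, max c C, hc, le_max_left _ _, fun x y t ht =>
    ⟨hc' x y t ht, (hC x y t ht).trans ?_⟩⟩
  gcongr
  exact le_max_right _ _

/-- two-sided bound
`Q_t^σ(x,y) ≍ t^{2σ} / ( V(x, t+d(x,y)) (t+d(x,y))^{2σ} )`. -/
theorem stmt_5
    {M : Type*} [MetricSpace M] [MeasurableSpace M] [BorelSpace M]
    (μ : Measure M)
    (hVpos : ∀ (x : M) (r : ℝ), 0 < r → 0 < μ (ball x r))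
    (hVfin : ∀ (x : M) (r : ℝ), 0 < r → μ (ball x r) < ⊤)
    -- volume comparability
    (ν ν' c₀ C₀ : ℝ) (hν' : 0 < ν') (hνν : ν' ≤ ν) (hc₀ : 0 < c₀) (hc₀C₀ : c₀ ≤ C₀)
    (hdoub : ∀ (x : M) (r R : ℝ), 0 < r → r ≤ R →
        c₀ * (R/r) ^ ν' ≤ (μ (ball x R)).toReal / (μ (ball x r)).toReal ∧
        (μ (ball x R)).toReal / (μ (ball x r)).toReal ≤ C₀ * (R/r) ^ ν)
    (hcomp : ∀ (x y : M) (r : ℝ), 0 < r →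
        (μ (ball x r)).toReal ≤ C₀ * (1 + dist x y / r) ^ ν * (μ (ball y r)).toReal)
    -- heat kernel with Li–Yau two-sided Gaussian estimate
    (h : ℝ → M → M → ℝ)
    (hhmeas : Measurable (fun p : ℝ × M × M => h p.1 p.2.1 p.2.2))
    (hhsym : ∀ u : ℝ, 0 < u → ∀ x y : M, h u x y = h u y x)
    (c₁ C₁ c₂ C₂ : ℝ) (hc₁ : 0 < c₁) (hC₁ : 0 < C₁) (hc₂ : 0 < c₂) (hC₂ : 0 < C₂)
    (hLY : ∀ u : ℝ, 0 < u → ∀ x y : M,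
        c₁ / (μ (ball y (Real.sqrt u))).toReal * Real.exp (-C₁ * (dist x y)^2 / u) ≤ h u x y ∧
        h u x y ≤ C₂ / (μ (ball y (Real.sqrt u))).toReal * Real.exp (-c₂ * (dist x y)^2 / u))
    (σ : ℝ) (hσ0 : 0 < σ) (hσ1 : σ < 1) :
    ∃ c' C' : ℝ, 0 < c' ∧ c' ≤ C' ∧ ∀ (x y : M) (t : ℝ), 0 < t →
      c' * (t ^ (2*σ) /
          ((μ (ball x (t + dist x y))).toReal * (t + dist x y) ^ (2*σ)))
        ≤ Qker h σ t x y ∧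
      Qker h σ t x y ≤
        C' * (t ^ (2*σ) /
          ((μ (ball x (t + dist x y))).toReal * (t + dist x y) ^ (2*σ))) :=
  stmt_5_general μ hVpos hVfin ν ν' c₀ C₀ hν' hνν hdoub hcomp h hhmeas c₁ C₁ c₂ C₂ hc₁ hC₁ hc₂ hC₂
    hLY σ hσ0
end
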